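/- arXiv:1705.09370 — 10 statements merged into one kernel-verified Lean document; each statement's English description precedes it below -/
import Mathlib

section
/- For any 2-colouring of the edges of the complete graph K_n (n ≥ 1), there exists a colour c such that the monochromatic subgraph in colour c is connected on all n vertices and has diameter at most 3. -/
/-!
If colour 0 has two distinct vertices `a`, `b` that are neither adjacent nor have a common
neighbour in colour 0, then in colour 1 the edge `ab` is dominating: every other vertex `x`
misses at least one of the colour-0 edges `xa`, `xb`, so it is joined to `a` or to `b` in
colour 1. A dominating edge gives diameter at most 3. Otherwise colour 0 already has
diameter at most 2.
-/

/-- The monochromatic subgraph `K_n[c]` of a `k`-colouring of the edges of `Kₙ`: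
vertices are all of `Fin n`, edges are those of colour `c`. -/
def monoGraph {n k : ℕ} (χ : Sym2 (Fin n) → Fin k) (c : Fin k) : SimpleGraph (Fin n) where
  Adj x y := x ≠ y ∧ χ s(x, y) = c
  symm := by
    constructor
    intro x y h
    exact ⟨h.1.symm, by rw [Sym2.eq_swap]; exact h.2⟩
  loopless := by constructor; intro x h; exact h.1 rfl

namespace SimpleGraph

variable {V : Type*} {G : SimpleGraph V}

theorem connected_and_dist_le_of_forall_exists_walk [Nonempty V] {k : ℕ}
    (h : ∀ x y : V, ∃ w : G.Walk x y, w.length ≤ k) :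
    G.Connected ∧ ∀ x y, G.dist x y ≤ k :=
  ⟨(connected_iff G).mpr ⟨fun x y => (h x y).choose.reachable, ‹_›⟩,
    fun x y => (h x y).elim fun w hw => (dist_le w).trans hw⟩

theorem exists_walk_length_le_two_of_forall_exists_common_neighbor
    (h : ∀ a b, a ≠ b → ¬G.Adj a b → ∃ x, G.Adj a x ∧ G.Adj x b) (x y : V) :
    ∃ w : G.Walk x y, w.length ≤ 2 := by
  by_cases hxy : x = y
  · subst hxy
    exact ⟨.nil, by simp⟩
  by_cases hadj : G.Adj x y
  · exact ⟨hadj.toWalk, by simp⟩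
  obtain ⟨z, hxz, hzy⟩ := h x y hxy hadj
  exact ⟨.cons hxz hzy.toWalk, by simp⟩

theorem exists_walk_length_le_three_of_dominating_edge {a b : V} (hab : G.Adj a b)
    (hdom : ∀ x, x ≠ a → x ≠ b → G.Adj x a ∨ G.Adj x b) (x y : V) :
    ∃ w : G.Walk x y, w.length ≤ 3 := by
  have near : ∀ z, ∃ u, (u = a ∨ u = b) ∧ ∃ w : G.Walk z u, w.length ≤ 1 := by
    intro z
    by_cases hza : z = a
    · exact hza ▸ ⟨z, .inl rfl, .nil, by simp⟩
    by_cases hzb : z = b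
    · exact hzb ▸ ⟨z, .inr rfl, .nil, by simp⟩
    rcases hdom z hza hzb with hz | hz
    · exact ⟨a, .inl rfl, hz.toWalk, by simp⟩
    · exact ⟨b, .inr rfl, hz.toWalk, by simp⟩
  have edge : ∀ u v, (u = a ∨ u = b) → (v = a ∨ v = b) →
      ∃ w : G.Walk u v, w.length ≤ 1 := by
    rintro u v (rfl | rfl) (rfl | rfl)
    · exact ⟨.nil, by simp⟩
    · exact ⟨hab.toWalk, by simp⟩
    · exact ⟨hab.symm.toWalk, by simp⟩
    · exact ⟨.nil, by simp⟩
  obtain ⟨u, hu, wx, hwx⟩ := near x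
  obtain ⟨v, hv, wy, hwy⟩ := near y
  obtain ⟨wuv, hwuv⟩ := edge u v hu hv
  refine ⟨wx.append (wuv.append wy.reverse), ?_⟩
  simp only [Walk.length_append, Walk.length_reverse]
  omega

theorem exists_walk_compl_length_le_three {a b : V} (hab : a ≠ b) (hnadj : ¬G.Adj a b)
    (hfar : ∀ x, ¬(G.Adj a x ∧ G.Adj x b)) (x y : V) :
    ∃ w : Gᶜ.Walk x y, w.length ≤ 3 := by
  refine exists_walk_length_le_three_of_dominating_edge (G := Gᶜ) ⟨hab, hnadj⟩
    (fun z hza hzb => ?_) x y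
  by_cases hGza : G.Adj z a
  · exact .inr ⟨hzb, fun hzb' => hfar z ⟨hGza.symm, hzb'⟩⟩
  · exact .inl ⟨hza, hGza⟩

end SimpleGraph

open SimpleGraph

theorem monoGraph_one_eq_compl {n : ℕ} (χ : Sym2 (Fin n) → Fin 2) :
    monoGraph χ 1 = (monoGraph χ 0)ᶜ := by
  ext x y
  simp only [monoGraph, compl_adj, not_and, ne_eq]
  have : χ s(x, y) = 1 ↔ χ s(x, y) ≠ 0 := by omega
  tauto

/-- For any 2-colouring of `E(Kₙ)` (`n ≥ 1`) there is a colour whose monochromatic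
subgraph is connected and of diameter at most 3. -/
theorem stmt0 (n : ℕ) (hn : 1 ≤ n) (χ : Sym2 (Fin n) → Fin 2) :
    ∃ c : Fin 2, (monoGraph χ c).Connected ∧
      ∀ x y : Fin n, (monoGraph χ c).dist x y ≤ 3 := by
  have : Nonempty (Fin n) := ⟨⟨0, hn⟩⟩
  by_cases hfar : ∃ a b, a ≠ b ∧ ¬(monoGraph χ 0).Adj a b ∧
      ∀ x, ¬((monoGraph χ 0).Adj a x ∧ (monoGraph χ 0).Adj x b)
  · obtain ⟨a, b, hab, hnadj, hcommon⟩ := hfar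
    refine ⟨1, connected_and_dist_le_of_forall_exists_walk fun x y => ?_⟩
    rw [monoGraph_one_eq_compl]
    exact exists_walk_compl_length_le_three hab hnadj hcommon x y
  · push Not at hfar
    refine ⟨0, connected_and_dist_le_of_forall_exists_walk fun x y => ?_⟩
    obtain ⟨w, hw⟩ := exists_walk_length_le_two_of_forall_exists_common_neighbor hfar x y
    exact ⟨w, hw.trans (by norm_num)⟩
end

section
/- For any 3-colouring of the edges of the complete graph K_n, there exist (not necessarily distinct) colours c₁, c₂ and vertex sets A₁, A₂ with A₁ ∪ A₂ = V(K_n) such that for each i ∈ {1,2}, the subgraph on vertex set A_i consisting of the edges of colour c_i within A_i is connected and has diameter at most 8. -/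
/-!
Fix a vertex `a`. If the colour-0 ball of radius 4 around `a` misses some `b`, let `q` be the
colour of `ab` and `s` the third colour. Either the `q`- and `s`-balls around `a` cover, or
the `q`- and `s`-balls around `b` cover, or there are witnesses `t`, `t'` outside them; these
force `ta`, `t'b` to have colour 0 and `tb`, `t'a` colour `s`. Then every vertex `x` lies
in the `s`-ball of radius 2 around `a` or `b`: otherwise `x` is `q`-close to `a` and `b`, so
`xt` and `xt'` are not `q`-edges, and if neither is an `s`-edge then `a t x t' b` is a
colour-0 walk of length 4. A ball of radius 4 induces a connected graph of diameter at most 8.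
-/

namespace SimpleGraph

variable {V : Type*} (G : SimpleGraph V)

def closedBall (u : V) (r : ℕ) : Set V := {x | G.edist u x ≤ r}

lemma exists_walk_induce_closedBall {u x : V} {r : ℕ} (hx : x ∈ G.closedBall u r) :
    ∃ p : (G.induce (G.closedBall u r)).Walk ⟨u, by simp [closedBall]⟩ ⟨x, hx⟩,
      p.length ≤ r := by
  classical
  change G.edist u x ≤ r at hx
  have hreach : G.Reachable u x :=
    G.edist_ne_top_iff_reachable.mp (ne_top_of_le_ne_top (by simp) hx)
  obtain ⟨p, hp⟩ := hreach.exists_walk_length_eq_edist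
  have hsupp : ∀ z ∈ p.support, z ∈ G.closedBall u r := fun z hz =>
    calc G.edist u z ≤ (p.takeUntil z hz).length := edist_le _
      _ ≤ p.length := by exact_mod_cast p.length_takeUntil_le_length hz
      _ ≤ r := hp ▸ hx
  refine ⟨p.induce _ hsupp, ?_⟩
  rw [← Walk.length_map (Embedding.induce _).toHom, Walk.map_induce]
  exact_mod_cast hp ▸ hx

lemma exists_walk_induce_closedBall_length_le_two_mul {u : V} {r : ℕ}
    (x y : G.closedBall u r) :
    ∃ p : (G.induce (G.closedBall u r)).Walk x y, p.length ≤ 2 * r := by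
  obtain ⟨px, hpx⟩ := G.exists_walk_induce_closedBall x.2
  obtain ⟨py, hpy⟩ := G.exists_walk_induce_closedBall y.2
  exact ⟨px.reverse.append py, by simp only [Walk.length_append, Walk.length_reverse]; omega⟩

lemma preconnected_induce_closedBall (u : V) (r : ℕ) :
    (G.induce (G.closedBall u r)).Preconnected := fun x y =>
  ⟨(G.exists_walk_induce_closedBall_length_le_two_mul x y).choose⟩

lemma dist_induce_closedBall_le {u : V} {r : ℕ} (x y : G.closedBall u r) :
    (G.induce (G.closedBall u r)).dist x y ≤ 2 * r :=
  have ⟨p, hp⟩ := G.exists_walk_induce_closedBall_length_le_two_mul x y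
  (dist_le p).trans hp

end SimpleGraph

open SimpleGraph

lemma Fin.exists_forall_eq_or_eq_or_eq {p q : Fin 3} (hpq : p ≠ q) :
    ∃ s, ∀ c, c = p ∨ c = q ∨ c = s := by
  revert p q
  decide

section Colouring

variable {n k : ℕ} (χ : Sym2 (Fin n) → Fin k)

local notation "δ[" c "]" => SimpleGraph.edist (monoGraph χ c)

lemma edist_monoGraph_le_one {c : Fin k} {x y : Fin n} (h : χ s(x, y) = c) :
    δ[c] x y ≤ 1 := by
  rw [edist_le_one_iff_adj_or_eq]
  by_cases hxy : x = y
  · exact Or.inr hxy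
  · exact Or.inl ⟨hxy, h⟩

lemma edist_monoGraph_le_add_one {c : Fin k} {u x y : Fin n} {r : ℕ∞}
    (hx : δ[c] u x ≤ r) (h : χ s(x, y) = c) :
    δ[c] u y ≤ r + 1 :=
  (monoGraph χ c).edist_triangle.trans (add_le_add hx (edist_monoGraph_le_one χ h))

variable {p q s : Fin k} {a b : Fin n}

lemma colour_eq_of_far_from_balls (hcol : ∀ c, c = p ∨ c = q ∨ c = s) (hab : χ s(a, b) = q)
    (hfar : 2 < δ[p] a b) {t : Fin n} (hqt : 2 < δ[q] a t) (hst : 1 < δ[s] a t) :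
    χ s(a, t) = p ∧ χ s(b, t) = s := by
  have hat : χ s(a, t) = p := by
    rcases hcol (χ s(a, t)) with h | h | h
    · exact h
    · exact absurd (hqt.trans_le (edist_monoGraph_le_one χ h)) (by norm_num)
    · exact absurd (hst.trans_le (edist_monoGraph_le_one χ h)) (lt_irrefl 1)
  refine ⟨hat, ?_⟩
  rcases hcol (χ s(b, t)) with h | h | h
  · have hab' : δ[p] a b ≤ 1 + 1 :=
      edist_monoGraph_le_add_one χ (edist_monoGraph_le_one χ hat) (by rwa [Sym2.eq_swap])
    exact absurd (hfar.trans_le hab') (by norm_num)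
  · have hat' : δ[q] a t ≤ 1 + 1 :=
      edist_monoGraph_le_add_one χ (edist_monoGraph_le_one χ hab) h
    exact absurd (hqt.trans_le hat') (by norm_num)
  · exact h

lemma edist_le_two_of_ne_colour (hcol : ∀ c, c = p ∨ c = q ∨ c = s) (hab : χ s(a, b) = q)
    (hfar : 2 < δ[p] a b) {x : Fin n} (hax : χ s(a, x) ≠ s) (hbx : χ s(b, x) ≠ s) :
    δ[q] a x ≤ 2 ∧ δ[q] b x ≤ 2 := by
  have hba : χ s(b, a) = q := by rwa [Sym2.eq_swap]
  rcases hcol (χ s(a, x)) with hax' | hax' | hax'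
  · rcases hcol (χ s(b, x)) with hbx' | hbx' | hbx'
    · have hab' : δ[p] a b ≤ 1 + 1 :=
        edist_monoGraph_le_add_one χ (edist_monoGraph_le_one χ hax') (by rwa [Sym2.eq_swap])
      exact absurd (hfar.trans_le hab') (by norm_num)
    · exact ⟨(edist_monoGraph_le_add_one χ (edist_monoGraph_le_one χ hab) hbx').trans
        (by norm_num), (edist_monoGraph_le_one χ hbx').trans (by norm_num)⟩
    · exact absurd hbx' hbx
  · exact ⟨(edist_monoGraph_le_one χ hax').trans (by norm_num),
      (edist_monoGraph_le_add_one χ (edist_monoGraph_le_one χ hba) hax').trans (by norm_num)⟩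
  · exact absurd hax' hax

lemma edist_le_two_of_witnesses (hcol : ∀ c, c = p ∨ c = q ∨ c = s) (hab : χ s(a, b) = q)
    (hfar : 4 < δ[p] a b) {t t' : Fin n} (hat : χ s(a, t) = p) (hbt : χ s(b, t) = s)
    (hqt : 3 < δ[q] a t) (hbt' : χ s(b, t') = p) (hat' : χ s(a, t') = s)
    (hqt' : 3 < δ[q] b t') (x : Fin n) :
    δ[s] a x ≤ 2 ∨ δ[s] b x ≤ 2 := by
  by_cases hax : χ s(a, x) = s
  · exact Or.inl ((edist_monoGraph_le_one χ hax).trans (by norm_num))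
  by_cases hbx : χ s(b, x) = s
  · exact Or.inr ((edist_monoGraph_le_one χ hbx).trans (by norm_num))
  obtain ⟨hqa, hqb⟩ :=
    edist_le_two_of_ne_colour χ hcol hab (hfar.trans' (by norm_num)) hax hbx
  rcases hcol (χ s(t, x)) with htx | htx | htx
  · rcases hcol (χ s(x, t')) with hxt' | hxt' | hxt'
    · have hab' : δ[p] a b ≤ 1 + 1 + 1 + 1 :=
        edist_monoGraph_le_add_one χ (edist_monoGraph_le_add_one χ
          (edist_monoGraph_le_add_one χ (edist_monoGraph_le_one χ hat) htx) hxt')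
          (by rwa [Sym2.eq_swap])
      exact absurd (hfar.trans_le hab') (by norm_num)
    · exact absurd (hqt'.trans_le (edist_monoGraph_le_add_one χ hqb hxt')) (by norm_num)
    · exact Or.inl (edist_monoGraph_le_add_one χ (edist_monoGraph_le_one χ hat')
        (by rwa [Sym2.eq_swap]))
  · exact absurd (hqt.trans_le (edist_monoGraph_le_add_one χ hqa (by rwa [Sym2.eq_swap])))
      (by norm_num)
  · exact Or.inr (edist_monoGraph_le_add_one χ (edist_monoGraph_le_one χ hbt) htx)

end Colouring

section ThreeColouring

variable {n : ℕ} (χ : Sym2 (Fin n) → Fin 3)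

local notation "δ[" c "]" => SimpleGraph.edist (monoGraph χ c)

theorem exists_two_monoGraph_balls_cover (a : Fin n) :
    ∃ (c₁ c₂ : Fin 3) (u₁ u₂ : Fin n),
      ∀ x, δ[c₁] u₁ x ≤ 4 ∨ δ[c₂] u₂ x ≤ 4 := by
  by_cases h₀ : ∀ x, δ[0] a x ≤ 4
  · exact ⟨0, 0, a, a, fun x => Or.inl (h₀ x)⟩
  push Not at h₀
  obtain ⟨b, hfar⟩ := h₀
  obtain ⟨q, hab⟩ : ∃ q, χ s(a, b) = q := ⟨_, rfl⟩
  have hq : 0 ≠ q := by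
    rintro rfl
    exact absurd (hfar.trans_le (edist_monoGraph_le_one χ hab)) (by norm_num)
  obtain ⟨s, hcol⟩ := Fin.exists_forall_eq_or_eq_or_eq hq
  by_cases ha : ∀ x, δ[q] a x ≤ 4 ∨ δ[s] a x ≤ 4
  · exact ⟨q, s, a, a, ha⟩
  by_cases hb : ∀ x, δ[q] b x ≤ 4 ∨ δ[s] b x ≤ 4
  · exact ⟨q, s, b, b, hb⟩
  push Not at ha hb
  obtain ⟨t, hqt, hst⟩ := ha
  obtain ⟨t', hqt', hst'⟩ := hb
  obtain ⟨hat, hbt⟩ := colour_eq_of_far_from_balls χ hcol hab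
    (hfar.trans' (by norm_num)) (hqt.trans' (by norm_num)) (hst.trans' (by norm_num))
  obtain ⟨hbt', hat'⟩ := colour_eq_of_far_from_balls χ hcol (by rwa [Sym2.eq_swap])
    (by rw [edist_comm]; exact hfar.trans' (by norm_num))
    (hqt'.trans' (by norm_num)) (hst'.trans' (by norm_num))
  refine ⟨s, s, a, b, fun x => ?_⟩
  exact (edist_le_two_of_witnesses χ hcol hab hfar hat hbt (hqt.trans' (by norm_num))
    hbt' hat' (hqt'.trans' (by norm_num)) x).imp
    (·.trans (by norm_num)) (·.trans (by norm_num))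

end ThreeColouring

/-- For any 3-colouring of `E(Kₙ)` there are colours `c₁, c₂` and sets `A₁, A₂`
covering the vertices such that each `K_n[A_i, c_i]` is connected of diameter at most 8. -/
theorem stmt1 (n : ℕ) (χ : Sym2 (Fin n) → Fin 3) :
    ∃ (c₁ c₂ : Fin 3) (A₁ A₂ : Set (Fin n)),
      A₁ ∪ A₂ = Set.univ ∧
      ((monoGraph χ c₁).induce A₁).Preconnected ∧
      (∀ x y : A₁, ((monoGraph χ c₁).induce A₁).dist x y ≤ 8) ∧
      ((monoGraph χ c₂).induce A₂).Preconnected ∧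
      (∀ x y : A₂, ((monoGraph χ c₂).induce A₂).dist x y ≤ 8) := by
  rcases isEmpty_or_nonempty (Fin n) with hn | ⟨⟨a⟩⟩
  · exact ⟨0, 0, ∅, ∅, Set.eq_univ_of_forall isEmptyElim, isEmptyElim, isEmptyElim,
      isEmptyElim, isEmptyElim⟩
  obtain ⟨c₁, c₂, u₁, u₂, hcover⟩ := exists_two_monoGraph_balls_cover χ a
  exact ⟨c₁, c₂, (monoGraph χ c₁).closedBall u₁ 4, (monoGraph χ c₂).closedBall u₂ 4,
    Set.eq_univ_of_forall hcover,
    preconnected_induce_closedBall _ u₁ 4, dist_induce_closedBall_le _,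
    preconnected_induce_closedBall _ u₂ 4, dist_induce_closedBall_le _⟩
end

section
/- For every l ≥ 1 and d ≥ 0 there is a constant N = N(l,d) such that the following holds: if S is a finite set of vertices of the graph G_l (vertex set ℕ^l, edges between tuples differing in every coordinate) such that the induced subgraph G_l[S] has maximum degree at most d, then the number of non-isolated vertices of G_l[S] is at most N. -/
/-- The graph `G_l` on `ℕ^l`: two tuples are adjacent iff they differ in every coordinate. -/
def Gl (l : ℕ) : SimpleGraph (Fin l → ℕ) where
  Adj x y := x ≠ y ∧ ∀ i, x i ≠ y i
  symm := ⟨fun _ _ h => ⟨h.1.symm, fun i => (h.2 i).symm⟩⟩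
  loopless := ⟨fun _ h => h.1 rfl⟩

/-!
Fix a family `P` of edges `(a, b)` of `G_l[S]`, maximal subject to `a` not being adjacent to `b'`
for distinct members `(a, b)`, `(a', b')`. By maximality every non-isolated vertex is within
distance two of an endpoint of `P`, so there are at most `2 |P| d²` of them.

In `G_l`, non-adjacency of `a` and `b'` means that they agree in some coordinate. Fix one member
`(a₀, b₀)` and record, for every other member `(a, b)`, a coordinate `i` with `a i = b₀ i` and a
coordinate `j` with `b j = a₀ j`. Members with the same record `(i, j)` form a family of the same
kind in which the coordinates `i` and `j` can no longer witness the agreement, so by induction on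
the number of coordinates `|P|` is bounded in terms of `l` alone.
-/

open Finset

def crossFreeBound : ℕ → ℕ
  | 0 => 1
  | n + 1 => 1 + (n + 1) ^ 2 * crossFreeBound n

def IsCrossFreeOn {ι α β : Type*} (D : Finset α) (s : Finset ι) (p q : ι → α → β) : Prop :=
  (∀ k ∈ s, ∀ i ∈ D, p k i ≠ q k i) ∧ ∀ k ∈ s, ∀ k' ∈ s, k ≠ k' → ∃ i ∈ D, p k i = q k' i

namespace IsCrossFreeOn

variable {ι α β : Type*} {D : Finset α} {s : Finset ι} {p q : ι → α → β}

lemma filter_erase_erase [DecidableEq α] [DecidableEq β] (h : IsCrossFreeOn D s p q)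
    (i j : α) (x y : β) :
    IsCrossFreeOn ((D.erase i).erase j) {k ∈ s | p k i = x ∧ q k j = y} p q := by
  refine ⟨fun k hk t ht => h.1 k (mem_filter.1 hk).1 t (mem_of_mem_erase (mem_of_mem_erase ht)),
    fun k hk k' hk' hkk' => ?_⟩
  simp only [mem_filter] at hk hk'
  obtain ⟨t, ht, hpq⟩ := h.2 k hk.1 k' hk'.1 hkk'
  refine ⟨t, mem_erase.2 ⟨?_, mem_erase.2 ⟨?_, ht⟩⟩, hpq⟩
  · rintro rfl
    exact h.1 k hk.1 t ht (hpq.trans (hk'.2.2.trans hk.2.2.symm))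
  · rintro rfl
    exact h.1 k' hk'.1 t ht (hk'.2.1.trans (hk.2.1.symm.trans hpq))

lemma erase_subset_biUnion [DecidableEq ι] [DecidableEq α] [DecidableEq β]
    (h : IsCrossFreeOn D s p q) {k₀ : ι} (hk₀ : k₀ ∈ s) :
    s.erase k₀ ⊆ (D ×ˢ D).biUnion
      fun ij => {k ∈ s | p k ij.1 = q k₀ ij.1 ∧ q k ij.2 = p k₀ ij.2} := by
  intro k hk
  obtain ⟨hkk₀, hks⟩ := mem_erase.1 hk
  obtain ⟨i, hi, hpi⟩ := h.2 k hks k₀ hk₀ hkk₀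
  obtain ⟨j, hj, hqj⟩ := h.2 k₀ hk₀ k hks hkk₀.symm
  exact mem_biUnion.2 ⟨(i, j), mem_product.2 ⟨hi, hj⟩, mem_filter.2 ⟨hks, hpi, hqj.symm⟩⟩

theorem card_le_crossFreeBound (h : IsCrossFreeOn D s p q) {n : ℕ} (hD : #D ≤ n) :
    #s ≤ crossFreeBound n := by
  classical
  induction n generalizing D s with
  | zero =>
    rw [Nat.le_zero, card_eq_zero] at hD
    subst hD
    refine card_le_one.2 fun k hk k' hk' => by_contra fun hkk' => ?_
    obtain ⟨i, hi, -⟩ := h.2 k hk k' hk' hkk'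
    exact notMem_empty i hi
  | succ n ih =>
    obtain rfl | ⟨k₀, hk₀⟩ := s.eq_empty_or_nonempty
    · simp
    have hfiber : ∀ ij ∈ D ×ˢ D,
        #{k ∈ s | p k ij.1 = q k₀ ij.1 ∧ q k ij.2 = p k₀ ij.2} ≤ crossFreeBound n := by
      intro ij hij
      refine ih (h.filter_erase_erase _ _ _ _) ?_
      have := card_erase_of_mem (mem_product.1 hij).1
      have := card_erase_le (s := D.erase ij.1) (a := ij.2)
      omega
    calc #s = #(s.erase k₀) + 1 := (card_erase_add_one hk₀).symm
      _ ≤ #D * #D * crossFreeBound n + 1 := by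
        grw [h.erase_subset_biUnion hk₀, card_biUnion_le, sum_le_card_nsmul _ _ _ hfiber,
          card_product, smul_eq_mul]
      _ ≤ crossFreeBound (n + 1) := by
        rw [crossFreeBound]
        have := Nat.mul_le_mul hD hD
        nlinarith

end IsCrossFreeOn

def endpoints {V : Type*} [DecidableEq V] (P : Finset (V × V)) : Finset V :=
  P.image Prod.fst ∪ P.image Prod.snd

section endpoints

variable {V : Type*} [DecidableEq V] {P : Finset (V × V)} {e : V × V}

lemma fst_mem_endpoints (he : e ∈ P) : e.1 ∈ endpoints P :=
  mem_union_left _ (mem_image_of_mem _ he)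

lemma snd_mem_endpoints (he : e ∈ P) : e.2 ∈ endpoints P :=
  mem_union_right _ (mem_image_of_mem _ he)

lemma card_endpoints_le : #(endpoints P) ≤ 2 * #P := by
  grw [endpoints, card_union_le, card_image_le, card_image_le, two_mul]

lemma endpoints_subset {F : Finset V} (hP : P ⊆ F ×ˢ F) : endpoints P ⊆ F := by
  refine union_subset ?_ ?_ <;> intro w hw <;> obtain ⟨e, he, rfl⟩ := mem_image.1 hw
  exacts [(mem_product.1 (hP he)).1, (mem_product.1 (hP he)).2]

end endpoints

namespace SimpleGraph

variable {V : Type*} (G : SimpleGraph V)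

def IsCrossFree (P : Finset (V × V)) : Prop :=
  (∀ e ∈ P, G.Adj e.1 e.2) ∧ ∀ e ∈ P, ∀ e' ∈ P, e ≠ e' → ¬ G.Adj e.1 e'.2

variable {G}

lemma IsCrossFree.insert [DecidableEq V] {P : Finset (V × V)} (hP : G.IsCrossFree P) {a b : V}
    (hab : G.Adj a b) (ha : ∀ e ∈ P, ¬ G.Adj a e.2) (hb : ∀ e ∈ P, ¬ G.Adj e.1 b) :
    G.IsCrossFree (insert (a, b) P) := by
  refine ⟨forall_mem_insert _ _ _ |>.2 ⟨hab, hP.1⟩, fun e he e' he' hne => ?_⟩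
  rcases mem_insert.1 he with rfl | he <;> rcases mem_insert.1 he' with rfl | he'
  exacts [absurd rfl hne, ha e' he', hb e he, hP.2 e he e' he' hne]

variable (G)

lemma exists_maximal_isCrossFree [DecidableEq V] (F : Finset V) :
    ∃ P ⊆ F ×ˢ F, G.IsCrossFree P ∧
      ∀ e ∈ F ×ˢ F, e ∉ P → ¬ G.IsCrossFree (insert e P) := by
  classical
  obtain ⟨P, hP, hmax⟩ := exists_max_image ((F ×ˢ F).powerset.filter G.IsCrossFree) card
    ⟨∅, by simp [IsCrossFree]⟩
  obtain ⟨hPF, hPcf⟩ := mem_filter.1 hP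
  refine ⟨P, mem_powerset.1 hPF, hPcf, fun e he heP hins => ?_⟩
  have := hmax _ (mem_filter.2 ⟨mem_powerset.2 (insert_subset he (mem_powerset.1 hPF)), hins⟩)
  rw [card_insert_of_notMem heP] at this
  omega

variable [DecidableEq V] [DecidableRel G.Adj]

def nbhdIn (F X : Finset V) : Finset V :=
  X.biUnion fun w => {v ∈ F | G.Adj w v}

variable {G} {F X : Finset V} {P : Finset (V × V)} {d : ℕ}

lemma mem_nbhdIn {v : V} : v ∈ G.nbhdIn F X ↔ v ∈ F ∧ ∃ w ∈ X, G.Adj w v := by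
  simp only [nbhdIn, mem_biUnion, mem_filter]
  tauto

lemma nbhdIn_subset : G.nbhdIn F X ⊆ F :=
  fun _ hv => (mem_nbhdIn.1 hv).1

lemma card_nbhdIn_le (hdeg : ∀ v ∈ F, #{u ∈ F | G.Adj v u} ≤ d) (hX : X ⊆ F) :
    #(G.nbhdIn F X) ≤ #X * d := by
  grw [nbhdIn, card_biUnion_le, sum_le_card_nsmul _ _ _ fun w hw => hdeg w (hX hw), smul_eq_mul]

lemma endpoints_subset_nbhdIn (hP : G.IsCrossFree P) (hPF : P ⊆ F ×ˢ F) :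
    endpoints P ⊆ G.nbhdIn F (endpoints P) := by
  intro w hw
  refine mem_nbhdIn.2 ⟨endpoints_subset hPF hw, ?_⟩
  rcases mem_union.1 hw with hw | hw <;> obtain ⟨e, he, rfl⟩ := mem_image.1 hw
  exacts [⟨e.2, snd_mem_endpoints he, (hP.1 e he).symm⟩, ⟨e.1, fst_mem_endpoints he, hP.1 e he⟩]

lemma nonisolated_subset_nbhdIn_nbhdIn (hPF : P ⊆ F ×ˢ F) (hP : G.IsCrossFree P)
    (hmax : ∀ e ∈ F ×ˢ F, e ∉ P → ¬ G.IsCrossFree (insert e P)) :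
    {v ∈ F | ∃ u ∈ F, G.Adj v u} ⊆ G.nbhdIn F (G.nbhdIn F (endpoints P)) := by
  intro v hv
  obtain ⟨hvF, u, huF, hvu⟩ := mem_filter.1 hv
  refine mem_nbhdIn.2 ⟨hvF, ?_⟩
  by_cases hu : u ∈ G.nbhdIn F (endpoints P)
  · exact ⟨u, hu, hvu.symm⟩
  by_cases hv' : v ∈ G.nbhdIn F (endpoints P)
  · obtain ⟨-, w, hw, hwv⟩ := mem_nbhdIn.1 hv'
    exact ⟨w, endpoints_subset_nbhdIn hP hPF hw, hwv⟩
  refine absurd (hP.insert hvu (fun e he hve => hv' ?_) (fun e he heu => hu ?_))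
    (hmax (v, u) (mem_product.2 ⟨hvF, huF⟩) fun hvuP => hv' ?_)
  · exact mem_nbhdIn.2 ⟨hvF, e.2, snd_mem_endpoints he, hve.symm⟩
  · exact mem_nbhdIn.2 ⟨huF, e.1, fst_mem_endpoints he, heu⟩
  · exact mem_nbhdIn.2 ⟨hvF, u, snd_mem_endpoints hvuP, hvu.symm⟩

theorem card_nonisolated_le (hdeg : ∀ v ∈ F, #{u ∈ F | G.Adj v u} ≤ d)
    (hPF : P ⊆ F ×ˢ F) (hP : G.IsCrossFree P)
    (hmax : ∀ e ∈ F ×ˢ F, e ∉ P → ¬ G.IsCrossFree (insert e P)) :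
    #{v ∈ F | ∃ u ∈ F, G.Adj v u} ≤ 2 * #P * d * d :=
  calc #{v ∈ F | ∃ u ∈ F, G.Adj v u}
      ≤ #(G.nbhdIn F (G.nbhdIn F (endpoints P))) :=
        card_le_card (nonisolated_subset_nbhdIn_nbhdIn hPF hP hmax)
    _ ≤ #(G.nbhdIn F (endpoints P)) * d := card_nbhdIn_le hdeg nbhdIn_subset
    _ ≤ #(endpoints P) * d * d := by grw [card_nbhdIn_le hdeg (endpoints_subset hPF)]
    _ ≤ 2 * #P * d * d := by grw [card_endpoints_le]

end SimpleGraph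

namespace Gl

variable {l : ℕ}

lemma exists_eq_of_adj_of_not_adj {x y z : Fin l → ℕ} (hxy : (Gl l).Adj x y)
    (hxz : ¬ (Gl l).Adj x z) : ∃ i, x i = z i := by
  by_contra! h
  obtain ⟨i, -⟩ := Function.ne_iff.1 hxy.1
  exact hxz ⟨fun hxz' => h i (congrFun hxz' i), h⟩

lemma card_le_crossFreeBound {P : Finset ((Fin l → ℕ) × (Fin l → ℕ))}
    (hP : (Gl l).IsCrossFree P) : #P ≤ crossFreeBound l := by
  refine IsCrossFreeOn.card_le_crossFreeBound (D := univ) (p := Prod.fst) (q := Prod.snd)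
    ⟨fun e he i _ => (hP.1 e he).2 i, fun e he e' he' hne => ?_⟩ (by simp)
  obtain ⟨i, hi⟩ := exists_eq_of_adj_of_not_adj (hP.1 e he) (hP.2 e he e' he' hne)
  exact ⟨i, mem_univ i, hi⟩

end Gl

theorem stmt5_general (l d : ℕ) :
    ∃ N : ℕ, ∀ S : Set (Fin l → ℕ), S.Finite →
      (∀ v ∈ S, {u ∈ S | (Gl l).Adj v u}.ncard ≤ d) →
      {v ∈ S | ∃ u ∈ S, (Gl l).Adj v u}.ncard ≤ N := by
  classical
  refine ⟨2 * crossFreeBound l * d * d, fun S hS hdeg => ?_⟩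
  obtain ⟨F, rfl⟩ := hS.exists_finset_coe
  have hdegF : ∀ v ∈ F, #{u ∈ F | (Gl l).Adj v u} ≤ d := by
    simp_rw [← Set.ncard_coe_finset, coe_filter]
    simpa using hdeg
  obtain ⟨P, hPF, hP, hmax⟩ := (Gl l).exists_maximal_isCrossFree F
  have hbound : #{v ∈ F | ∃ u ∈ F, (Gl l).Adj v u} ≤ 2 * crossFreeBound l * d * d :=
    calc _ ≤ 2 * #P * d * d := SimpleGraph.card_nonisolated_le hdegF hPF hP hmax
      _ ≤ 2 * crossFreeBound l * d * d := by grw [Gl.card_le_crossFreeBound hP]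
  simp_rw [← Set.ncard_coe_finset, coe_filter] at hbound
  simpa using hbound

/-- For every `l ≥ 1` and `d` there is `N = N(l,d)` such that any finite `S ⊆ ℕ^l`
whose induced subgraph in `G_l` has maximum degree at most `d` has at most `N`
non-isolated vertices. -/
theorem stmt5 (l d : ℕ) (hl : 1 ≤ l) :
    ∃ N : ℕ, ∀ S : Set (Fin l → ℕ), S.Finite →
      (∀ v ∈ S, {u ∈ S | (Gl l).Adj v u}.ncard ≤ d) →
      {v ∈ S | ∃ u ∈ S, (Gl l).Adj v u}.ncard ≤ N :=
  stmt5_general l d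
end

section
/- If S is a finite set of vertices of the graph G₃ such that the induced subgraph G₃[S] is a path (i.e., S can be enumerated s₁,...,s_r where the only edges among vertices of S are s_i s_{i+1} for 1 ≤ i ≤ r−1), then |S| ≤ 30. -/
open Finset

variable {ι α : Type*}

/-- `t 0, …, t (r - 1)` is an induced path, without repetitions, in the graph on `ι → α`
joining two tuples iff they differ in every coordinate. -/
structure IsInducedPath (t : ℕ → ι → α) (r : ℕ) : Prop where
  ne_succ : ∀ k, k + 1 < r → ∀ c, t k c ≠ t (k + 1) c
  exists_eq : ∀ i j, j < r → i + 2 ≤ j → ∃ c, t i c = t j c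
  injOn : Set.InjOn t (Set.Iio r)

def AgreeOn (t : ℕ → ι → α) (B : Finset ℕ) (C : Finset ι) : Prop :=
  ∀ x ∈ B, ∀ y ∈ B, ∀ c ∈ C, t x c = t y c

def pathBound : ℕ → ℕ
  | 0 => 1
  | k + 1 => (k + 1) * pathBound k + 2

lemma card_le_sum_card_filter_eq [DecidableEq α] (t : ℕ → ι → α) (p : ℕ)
    (B : Finset ℕ) (D : Finset ι) (h : ∀ x ∈ B, ∃ c ∈ D, t x c = t p c) :
    #B ≤ ∑ c ∈ D, #{x ∈ B | t x c = t p c} := by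
  calc #B ≤ #(D.biUnion fun c => {x ∈ B | t x c = t p c}) := by
        refine card_le_card fun x hx => ?_
        obtain ⟨c, hc, hxc⟩ := h x hx
        exact mem_biUnion.2 ⟨c, hc, mem_filter.2 ⟨hx, hxc⟩⟩
    _ ≤ _ := card_biUnion_le

lemma AgreeOn.mono {t : ℕ → ι → α} {B B' : Finset ℕ} {C : Finset ι} (h : AgreeOn t B C)
    (hB' : B' ⊆ B) : AgreeOn t B' C :=
  fun x hx y hy => h x (hB' hx) y (hB' hy)

lemma AgreeOn.filter_insert [DecidableEq ι] [DecidableEq α] {t : ℕ → ι → α} {B : Finset ℕ}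
    {C : Finset ι} (h : AgreeOn t B C) (c : ι) (p : ℕ) :
    AgreeOn t {x ∈ B | t x c = t p c} (insert c C) := by
  intro x hx y hy d hd
  rw [mem_filter] at hx hy
  rcases mem_insert.1 hd with rfl | hd
  · rw [hx.2, hy.2]
  · exact h x hx.1 y hy.1 d hd

namespace IsInducedPath

variable {t : ℕ → ι → α} {r : ℕ}

lemma card_le_one_of_agreeOn_univ [Fintype ι] (hP : IsInducedPath t r) {B : Finset ℕ}
    (hB : ∀ x ∈ B, x < r) (h : AgreeOn t B univ) : #B ≤ 1 :=
  card_le_one.2 fun x hx y hy =>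
    hP.injOn (hB x hx) (hB y hy) (funext fun c => h x hx y hy c (mem_univ c))

lemma exists_notMem_eq_succ_of_min (hP : IsInducedPath t r) {B : Finset ℕ} {C : Finset ι}
    (hC : C.Nonempty) (h : AgreeOn t B C) {b : ℕ} (hb : b ∈ B) (hmin : ∀ x ∈ B, b ≤ x)
    (hbr : b + 1 < r) {x : ℕ} (hx : x ∈ B) (hxb : x ≠ b) (hxb2 : x ≠ b + 2) (hxr : x < r) :
    ∃ c ∉ C, t x c = t (b + 1) c := by
  have hne : ∀ c ∈ C, t x c ≠ t (b + 1) c := fun c hc => by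
    rw [h x hx b hb c hc]
    exact hP.ne_succ b hbr c
  obtain ⟨c₀, hc₀⟩ := hC
  have hxb1 : x ≠ b + 1 := by
    rintro rfl
    exact hne c₀ hc₀ rfl
  obtain ⟨c, hc⟩ := hP.exists_eq (b + 1) x hxr (by have := hmin x hx; omega)
  exact ⟨c, fun hcC => hne c hcC hc.symm, hc.symm⟩

lemma card_le_pathBound [Fintype ι] [DecidableEq ι] [DecidableEq α] (hP : IsInducedPath t r)
    {B : Finset ℕ} {C : Finset ι} (hB : ∀ x ∈ B, x < r) (hC : C.Nonempty)
    (h : AgreeOn t B C) : #B ≤ pathBound #Cᶜ := by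
  induction hk : #Cᶜ generalizing B C with
  | zero =>
    rw [card_eq_zero, compl_eq_empty_iff] at hk
    subst hk
    exact hP.card_le_one_of_agreeOn_univ hB h
  | succ k ih =>
    rcases le_or_gt #B 1 with hB1 | hB1
    · exact hB1.trans (by simp only [pathBound]; omega)
    obtain ⟨y, hy, z, hz, hyz⟩ := one_lt_card.1 hB1
    set b := B.min' (card_pos.1 (by omega))
    have hb : b ∈ B := min'_mem _ _
    have hmin : ∀ x ∈ B, b ≤ x := fun x hx => min'_le B x hx
    have hbr : b + 1 < r := by
      have := hB y hy; have := hB z hz; have := hmin y hy; have := hmin z hz; omega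
    set B₀ := (B.erase b).erase (b + 2)
    have hB₀ : #B ≤ #B₀ + 2 := by
      have h₁ : #B - 1 ≤ #(B.erase b) := pred_card_le_card_erase
      have h₂ : #(B.erase b) - 1 ≤ #B₀ := pred_card_le_card_erase
      omega
    have hshare : ∀ x ∈ B₀, ∃ c ∈ Cᶜ, t x c = t (b + 1) c := fun x hx => by
      simp only [B₀, mem_erase] at hx
      obtain ⟨c, hc, hxc⟩ := hP.exists_notMem_eq_succ_of_min hC h hb hmin hbr hx.2.2 hx.2.1 hx.1
        (hB x hx.2.2)
      exact ⟨c, mem_compl.2 hc, hxc⟩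
    have hfib : ∀ c ∈ Cᶜ, #{x ∈ B₀ | t x c = t (b + 1) c} ≤ pathBound k := fun c hc => by
      refine ih (fun x hx => hB x (mem_of_mem_erase (mem_of_mem_erase (mem_filter.1 hx).1)))
        (insert_nonempty c C) ((h.mono ?_).filter_insert c (b + 1)) ?_
      · exact (erase_subset _ _).trans (erase_subset _ _)
      · rw [compl_insert, card_erase_of_mem hc, hk]; rfl
    calc #B ≤ #B₀ + 2 := hB₀
      _ ≤ ∑ c ∈ Cᶜ, #{x ∈ B₀ | t x c = t (b + 1) c} + 2 := by
        gcongr; exact card_le_sum_card_filter_eq t (b + 1) B₀ Cᶜ hshare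
      _ ≤ ∑ c ∈ Cᶜ, pathBound k + 2 := by gcongr with c hc; exact hfib c hc
      _ = pathBound (k + 1) := by simp [hk, pathBound]

theorem le_two_add_card_mul_pathBound [Fintype ι] [DecidableEq ι] [DecidableEq α]
    (hP : IsInducedPath t r) : r ≤ 2 + Fintype.card ι * pathBound (Fintype.card ι - 1) := by
  have hshare : ∀ x ∈ Ico 2 r, ∃ c ∈ univ, t x c = t 0 c := fun x hx => by
    obtain ⟨c, hc⟩ := hP.exists_eq 0 x (mem_Ico.1 hx).2 (mem_Ico.1 hx).1
    exact ⟨c, mem_univ c, hc.symm⟩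
  have hfib : ∀ c : ι, #{x ∈ Ico 2 r | t x c = t 0 c} ≤ pathBound (Fintype.card ι - 1) :=
    fun c => by
      rw [← card_singleton c, ← card_compl]
      refine hP.card_le_pathBound ?_ (singleton_nonempty c) ?_
      · exact fun x hx => (mem_Ico.1 (mem_filter.1 hx).1).2
      · intro x hx y hy d hd
        rw [mem_singleton.1 hd, (mem_filter.1 hx).2, (mem_filter.1 hy).2]
  have := (card_le_sum_card_filter_eq t 0 (Ico 2 r) univ hshare).trans
    (sum_le_card_nsmul _ _ _ fun c _ => hfib c)
  simp only [Nat.card_Ico, card_univ, smul_eq_mul] at this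
  omega

end IsInducedPath

lemma isInducedPath_of_adj_iff {l r : ℕ} {s : Fin r → (Fin l → ℕ)} (hinj : Function.Injective s)
    (hpath : ∀ i j : Fin r, (Gl l).Adj (s i) (s j) ↔ (i.val + 1 = j.val ∨ j.val + 1 = i.val)) :
    IsInducedPath (fun k => if h : k < r then s ⟨k, h⟩ else 0) r where
  ne_succ k hk := by
    simp only [dif_pos hk, dif_pos (Nat.lt_of_succ_lt hk)]
    exact ((hpath ⟨k, _⟩ ⟨k + 1, hk⟩).2 (Or.inl rfl)).2
  exists_eq i j hj hij := by
    have hi : i < r := by omega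
    simp only [dif_pos hi, dif_pos hj]
    have hne : s ⟨i, hi⟩ ≠ s ⟨j, hj⟩ := hinj.ne (Fin.ne_of_val_ne (by simp only; omega))
    have hnadj : ¬(Gl l).Adj (s ⟨i, hi⟩) (s ⟨j, hj⟩) := by rw [hpath]; simp only; omega
    by_contra! hall
    exact hnadj ⟨hne, hall⟩
  injOn x hx y hy hxy := by
    simp only [dif_pos (Set.mem_Iio.1 hx), dif_pos (Set.mem_Iio.1 hy)] at hxy
    exact Fin.mk.inj_iff.1 (hinj hxy)

/-- If a finite set `S` of vertices of `G₃` can be enumerated `s₀, …, s_{r-1}` so that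
the only adjacencies among vertices of `S` are between consecutive elements
(i.e. `G₃[S]` is a path), then `|S| ≤ 30`. -/
theorem stmt6 (S : Finset (Fin 3 → ℕ)) (r : ℕ) (s : Fin r → (Fin 3 → ℕ))
    (hinj : Function.Injective s)
    (hrange : ∀ x, x ∈ S ↔ ∃ i, s i = x)
    (hpath : ∀ i j : Fin r,
      (Gl 3).Adj (s i) (s j) ↔ (i.val + 1 = j.val ∨ j.val + 1 = i.val)) :
    S.card ≤ 30 := by
  have hS : S.card ≤ r :=
    calc S.card ≤ #(univ.image s) := card_le_card fun x hx => by
          obtain ⟨i, rfl⟩ := (hrange x).1 hx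
          exact mem_image_of_mem s (mem_univ i)
      _ ≤ r := card_image_le.trans (card_fin r).le
  have hr := (isInducedPath_of_adj_iff hinj hpath).le_two_add_card_mul_pathBound
  simp only [Fintype.card_fin] at hr
  have : pathBound (3 - 1) = 8 := rfl
  omega
end

section
/- Let S be a set of points in ℕ³ such that every three points of S are coplanar (i.e., for every three points there is a coordinate in which all three agree). Then S is contained in a plane, i.e., there exist a coordinate i and a value a such that every x ∈ S has x_i = a. (Here we may assume |S| ≥ 2 or handle small sets trivially.) -/
/-!
Suppose `S` is not contained in any coordinate plane through a point `p ∈ S`, and pick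
`q i ∈ S` with `q i i ≠ p i`. For `i ≠ j` the triple `p, q i, q j` can only be coplanar in the
third coordinate, so each `q i` agrees with `p` off the coordinate `i`. But then `q 0, q 1, q 2`
agree in no coordinate `l`, since `q l` is the only one of them leaving `p`'s value there.
-/

variable {α : Type*}

def CoordCoplanar (x y z : Fin 3 → α) : Prop :=
  ∃ i, x i = y i ∧ y i = z i

lemma Fin.exists_ne_ne_of_ne (i k : Fin 3) (h : i ≠ k) :
    ∃ j, j ≠ i ∧ j ≠ k ∧ ∀ l, l ≠ i → l ≠ j → l = k := by
  revert i k; decide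

section Witnesses

variable {p : Fin 3 → α} {q : Fin 3 → Fin 3 → α} (hq : ∀ i, q i i ≠ p i)
include hq

lemma apply_eq_of_ne_of_coordCoplanar (hcop : ∀ i j, CoordCoplanar p (q i) (q j))
    {i k : Fin 3} (hik : i ≠ k) : q i k = p k := by
  obtain ⟨j, hji, hjk, hthird⟩ := Fin.exists_ne_ne_of_ne i k hik
  obtain ⟨l, hpi, hij⟩ := hcop i j
  have hli : l ≠ i := by rintro rfl; exact hq l hpi.symm
  have hlj : l ≠ j := by rintro rfl; exact hq l (hij.symm.trans hpi.symm)
  obtain rfl := hthird l hli hlj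
  exact hpi.symm

lemma not_coordCoplanar_of_apply_eq (hoff : ∀ i k, i ≠ k → q i k = p k) :
    ¬ CoordCoplanar (q 0) (q 1) (q 2) := by
  rintro ⟨l, h01, h12⟩
  fin_cases l
  · exact hq 0 (h01.trans (hoff 1 0 (by decide)))
  · exact hq 1 (h01.symm.trans (hoff 0 1 (by decide)))
  · exact hq 2 (h12.symm.trans (hoff 1 2 (by decide)))

end Witnesses

theorem exists_forall_apply_eq_of_coordCoplanar {S : Set (Fin 3 → α)}
    (hS : ∀ x ∈ S, ∀ y ∈ S, ∀ z ∈ S, CoordCoplanar x y z) {p : Fin 3 → α} (hp : p ∈ S) :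
    ∃ i, ∀ x ∈ S, x i = p i := by
  by_contra! h
  choose q hqS hq using h
  have hoff i k (hik : i ≠ k) : q i k = p k :=
    apply_eq_of_ne_of_coordCoplanar hq (fun i j => hS p hp (q i) (hqS i) (q j) (hqS j)) hik
  exact not_coordCoplanar_of_apply_eq hq hoff (hS _ (hqS 0) _ (hqS 1) _ (hqS 2))

/-- If every three points of `S ⊆ ℕ³` are coplanar (agree in some coordinate),
then `S` lies in a single plane `{x : x i = a}`. -/
theorem stmt8 (S : Set (Fin 3 → ℕ))
    (hcop : ∀ x ∈ S, ∀ y ∈ S, ∀ z ∈ S, ∃ i : Fin 3, x i = y i ∧ y i = z i) :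
    ∃ (i : Fin 3) (a : ℕ), ∀ x ∈ S, x i = a := by
  rcases S.eq_empty_or_nonempty with rfl | ⟨p, hp⟩
  · exact ⟨0, 0, by simp⟩
  obtain ⟨i, hi⟩ := exists_forall_apply_eq_of_coordCoplanar hcop hp
  exact ⟨i, p i, hi⟩
end

section
/- Let I be an independent set of size 4 in the graph G₃ (on ℕ³, with edges between triples differing in all coordinates). Then at least one of the following holds: (S1) I is contained in a plane {x : x_i = a}; or (S2) I = {(a,b,c), (a',b',c), (a',b,c'), (a,b',c')} for some a ≠ a', b ≠ b', c ≠ c'; or (S3) up to a permutation of the three coordinates, I = {(a,b,c), (a,b,c'), (a,b',t), (a',b,t)} for some a ≠ a', b ≠ b', c ≠ c' and some value t. -/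
/-!
If three points of `I` lie on a plane `{x_i = a}`, the fourth point `w` agrees with each of them
in some coordinate. Unless `w` lies on that plane too, two of these agreements use the same
coordinate `j`; then either `I` lies on a plane `{x_j = b}`, or the remaining agreement uses the
third coordinate, and this is S3.

If no three points lie on a plane, a point `p` of `I` agrees with the other three in pairwise
different coordinates, so it has exactly one partner `X m` agreeing with it in each coordinate
`m`; two partners `X m`, `X n` can then only agree in the third coordinate, and this is S2.
-/

section

variable {α : Type*}

def IsS1 (T : Set (Fin 3 → α)) : Prop := ∃ (i : Fin 3) (a : α), ∀ x ∈ T, x i = a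

def IsS2 (T : Set (Fin 3 → α)) : Prop :=
  ∃ a a' b b' c c' : α, a ≠ a' ∧ b ≠ b' ∧ c ≠ c' ∧
    T = {![a, b, c], ![a', b', c], ![a', b, c'], ![a, b', c']}

def IsS3 (T : Set (Fin 3 → α)) : Prop :=
  ∃ (σ : Equiv.Perm (Fin 3)) (a a' b b' c c' t : α), a ≠ a' ∧ b ≠ b' ∧ c ≠ c' ∧
    T = (fun v => v ∘ σ) '' {![a, b, c], ![a, b, c'], ![a, b', t], ![a', b, t]}

theorem Fin.exists_perm_apply_eq_zero_one {i j : Fin 3} (hij : i ≠ j) :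
    ∃ σ : Equiv.Perm (Fin 3), σ i = 0 ∧ σ j = 1 := by
  revert i j; decide

theorem vec3_comp_perm_eq_of_apply {σ : Equiv.Perm (Fin 3)} {i j k : Fin 3}
    (hi : σ i = 0) (hj : σ j = 1) (hk : σ k = 2) {x : Fin 3 → α} {a b c : α}
    (ha : x i = a) (hb : x j = b) (hc : x k = c) : ![a, b, c] ∘ σ = x := by
  funext m
  obtain rfl | rfl | rfl : m = i ∨ m = j ∨ m = k := by
    have h : σ m = σ i ∨ σ m = σ j ∨ σ m = σ k := by rw [hi, hj, hk]; omega
    simpa only [σ.injective.eq_iff] using h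
  all_goals simp [*]

theorem vec3_eq_of_apply {x : Fin 3 → α} {a b c : α} (ha : x 0 = a) (hb : x 1 = b)
    (hc : x 2 = c) : ![a, b, c] = x :=
  vec3_comp_perm_eq_of_apply (σ := 1) rfl rfl rfl ha hb hc

theorem Finset.exists_coe_eq_insert_of_card_eq_four {I : Finset α}
    (hcard : I.card = 4) {x y z : α} (hx : x ∈ I) (hy : y ∈ I) (hz : z ∈ I) (hxy : x ≠ y)
    (hxz : x ≠ z) (hyz : y ≠ z) : ∃ w, (I : Set α) = {x, y, z, w} := by
  classical
  obtain ⟨w, hwI, hw⟩ := I.exists_mem_notMem_of_card_lt_card (s := {x, y, z})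
    (by grind [Finset.card_le_three])
  have : ({x, y, z, w} : Finset α) = I :=
    Finset.eq_of_subset_of_card_le (by grind) (by grind [Finset.card_eq_four])
  exact ⟨w, by simp [← this]⟩

theorem isS1_insert_four {P Q R S : Fin 3 → α} {i : Fin 3} (hQ : Q i = P i) (hR : R i = P i)
    (hS : S i = P i) : IsS1 {P, Q, R, S} :=
  ⟨i, P i, by rintro x (rfl | rfl | rfl | rfl) <;> first | rfl | assumption⟩

theorem isS2_insert_four {W X Y Z : Fin 3 → α} (hX : X 2 = W 2) (hY : Y 1 = W 1)
    (hZ : Z 0 = W 0) (hXY : Y 0 = X 0) (hXZ : Z 1 = X 1) (hYZ : Z 2 = Y 2) (ha : W 0 ≠ X 0)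
    (hb : W 1 ≠ X 1) (hc : W 2 ≠ Y 2) : IsS2 {W, X, Y, Z} :=
  ⟨W 0, X 0, W 1, X 1, W 2, Y 2, ha, hb, hc, by
    rw [vec3_eq_of_apply rfl rfl rfl, vec3_eq_of_apply rfl rfl hX, vec3_eq_of_apply hXY hY rfl,
      vec3_eq_of_apply hZ hXZ hYZ]⟩

theorem isS1_or_isS3_insert_four {P Q R S : Fin 3 → α} (hPQ : P ≠ Q) {i j m : Fin 3}
    (hij : i ≠ j) (hQi : Q i = P i) (hRi : R i = P i) (hSPj : S j = P j) (hSQj : S j = Q j)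
    (hSRm : S m = R m) : IsS1 {P, Q, R, S} ∨ IsS3 {P, Q, R, S} := by
  by_cases hSi : S i = P i
  · exact Or.inl (isS1_insert_four hQi hRi hSi)
  by_cases hRj : R j = P j
  · exact Or.inl (isS1_insert_four (hSQj.symm.trans hSPj) hRj hSPj)
  obtain ⟨σ, hσi, hσj⟩ := Fin.exists_perm_apply_eq_zero_one hij
  have hσm : σ m = 2 := by
    have hmi : m ≠ i := by rintro rfl; exact hSi (hSRm.trans hRi)
    have hmj : m ≠ j := by rintro rfl; exact hRj (hSRm.symm.trans hSPj)
    have := σ.injective.ne hmi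
    have := σ.injective.ne hmj
    omega
  have hQj : Q j = P j := hSQj.symm.trans hSPj
  have hPQm : P m ≠ Q m := fun h => hPQ <|
    (vec3_comp_perm_eq_of_apply hσi hσj hσm rfl rfl rfl).symm.trans
      (vec3_comp_perm_eq_of_apply hσi hσj hσm hQi hQj h.symm)
  refine Or.inr ⟨σ, P i, S i, P j, R j, P m, Q m, R m, Ne.symm hSi, Ne.symm hRj, hPQm, ?_⟩
  simp only [Set.image_insert_eq, Set.image_singleton]
  rw [vec3_comp_perm_eq_of_apply hσi hσj hσm rfl rfl rfl,
    vec3_comp_perm_eq_of_apply hσi hσj hσm hQi hQj rfl,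
    vec3_comp_perm_eq_of_apply hσi hσj hσm hRi rfl rfl,
    vec3_comp_perm_eq_of_apply hσi hσj hσm rfl hSPj hSRm]

theorem exists_partners_of_no_three_on_plane {I : Finset (Fin 3 → α)} (hcard : I.card = 4)
    (hind : ∀ x ∈ I, ∀ y ∈ I, ∃ i : Fin 3, x i = y i)
    (hthree : ∀ x ∈ I, ∀ y ∈ I, ∀ z ∈ I, ∀ i : Fin 3, y i = x i → z i = x i →
      x = y ∨ x = z ∨ y = z)
    {p : Fin 3 → α} (hp : p ∈ I) :
    ∃ X : Fin 3 → Fin 3 → α, Function.Injective X ∧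
      (∀ m, X m ∈ I ∧ X m ≠ p ∧ X m m = p m) ∧ (I : Set (Fin 3 → α)) = {p, X 2, X 1, X 0} := by
  classical
  choose! c hc using hind p hp
  have hc_inj : Set.InjOn c (I.erase p) := by
    intro y hy z hz hyz
    simp only [Finset.coe_erase, Set.mem_sdiff, Finset.mem_coe, Set.mem_singleton_iff] at hy hz
    rcases hthree p hp y hy.1 z hz.1 (c y) (hc y hy.1).symm (hyz ▸ (hc z hz.1).symm)
      with h | h | h
    exacts [absurd h.symm hy.2, absurd h.symm hz.2, h]
  have hsurj := Finset.surjOn_of_injOn_of_card_le c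
    (fun _ _ => Finset.mem_coe.mpr (Finset.mem_univ _)) hc_inj
    (by simp [Finset.card_erase_of_mem hp, hcard])
  choose X hXI hcX using fun m => hsurj (Finset.mem_univ m)
  simp only [Finset.coe_erase, Set.mem_sdiff, Finset.mem_coe, Set.mem_singleton_iff] at hXI
  have hXp (m : Fin 3) : X m m = p m := by simpa [hcX] using (hc (X m) (hXI m).1).symm
  refine ⟨X, fun m n h => by rw [← hcX m, ← hcX n, h],
    fun m => ⟨(hXI m).1, (hXI m).2, hXp m⟩, ?_⟩
  ext y
  simp only [Finset.mem_coe, Set.mem_insert_iff, Set.mem_singleton_iff]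
  refine ⟨fun hy => ?_, by rintro (rfl | rfl | rfl | rfl) <;> simp [hp, hXI]⟩
  by_cases hyp : y = p
  · exact Or.inl hyp
  have hXy : X (c y) = y := by
    rcases hthree p hp (X (c y)) (hXI _).1 y hy (c y) (hXp _) (hc y hy).symm with h | h | h
    exacts [absurd h.symm (hXI _).2, absurd h.symm hyp, h]
  rw [← hXy]
  obtain h | h | h : c y = 2 ∨ c y = 1 ∨ c y = 0 := by omega
  all_goals simp [h]

theorem isS2_of_no_three_on_plane {I : Finset (Fin 3 → α)} (hcard : I.card = 4)
    (hind : ∀ x ∈ I, ∀ y ∈ I, ∃ i : Fin 3, x i = y i)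
    (hthree : ∀ x ∈ I, ∀ y ∈ I, ∀ z ∈ I, ∀ i : Fin 3, y i = x i → z i = x i →
      x = y ∨ x = z ∨ y = z) :
    IsS2 (I : Set (Fin 3 → α)) := by
  obtain ⟨p, hp⟩ : I.Nonempty := Finset.card_pos.mp (by omega)
  obtain ⟨X, hX_inj, hX, hI⟩ := exists_partners_of_no_three_on_plane hcard hind hthree hp
  have hne {m n : Fin 3} (hmn : m ≠ n) : p m ≠ X n m := fun h => by
    rcases hthree p hp (X m) (hX m).1 (X n) (hX n).1 m (hX m).2.2 h.symm with h | h | h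
    exacts [(hX m).2.1 h.symm, (hX n).2.1 h.symm, hmn (hX_inj h)]
  have hpair {m n l : Fin 3} (hmn : m ≠ n) (hlm : l ≠ m) (hln : l ≠ n) : X n l = X m l := by
    obtain ⟨k, hk⟩ := hind (X m) (hX m).1 (X n) (hX n).1
    have hkm : k ≠ m := by rintro rfl; exact hne hmn ((hX k).2.2 ▸ hk)
    have hkn : k ≠ n := by rintro rfl; exact hne (Ne.symm hmn) ((hX k).2.2 ▸ hk.symm)
    obtain rfl : k = l := by omega
    exact hk.symm
  rw [hI]
  exact isS2_insert_four (hX 2).2.2 (hX 1).2.2 (hX 0).2.2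
    (hpair (by decide) (by decide) (by decide)) (hpair (by decide) (by decide) (by decide))
    (hpair (by decide) (by decide) (by decide))
    (hne (by decide)) (hne (by decide)) (hne (by decide))

theorem isS1_or_isS3_of_three_on_plane {I : Finset (Fin 3 → α)} (hcard : I.card = 4)
    (hind : ∀ x ∈ I, ∀ y ∈ I, ∃ i : Fin 3, x i = y i) {x y z : Fin 3 → α}
    (hx : x ∈ I) (hy : y ∈ I) (hz : z ∈ I) (hxy : x ≠ y) (hxz : x ≠ z) (hyz : y ≠ z)
    {i : Fin 3} (hyi : y i = x i) (hzi : z i = x i) :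
    IsS1 (I : Set (Fin 3 → α)) ∨ IsS3 (I : Set (Fin 3 → α)) := by
  obtain ⟨w, hw⟩ := I.exists_coe_eq_insert_of_card_eq_four hcard hx hy hz hxy hxz hyz
  have hwI : w ∈ I := by simp [← Finset.mem_coe, hw]
  obtain ⟨mx, hmx⟩ := hind w hwI x hx
  obtain ⟨my, hmy⟩ := hind w hwI y hy
  obtain ⟨mz, hmz⟩ := hind w hwI z hz
  rw [hw]
  by_cases hwi : w i = x i
  · exact Or.inl (isS1_insert_four hyi hzi hwi)
  have hmxi : i ≠ mx := by rintro rfl; exact hwi hmx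
  have hmyi : i ≠ my := by rintro rfl; exact hwi (hmy.trans hyi)
  have hmzi : i ≠ mz := by rintro rfl; exact hwi (hmz.trans hzi)
  obtain rfl | rfl | rfl : mx = my ∨ mx = mz ∨ my = mz := by omega
  · exact isS1_or_isS3_insert_four hxy hmxi hyi hzi hmx hmy hmz
  · rw [Set.insert_comm y z]
    exact isS1_or_isS3_insert_four hxz hmxi hzi hyi hmx hmz hmy
  · rw [Set.insert_comm x y, Set.insert_comm x z]
    exact isS1_or_isS3_insert_four hyz hmyi (hzi.trans hyi.symm) hyi.symm hmy hmz hmx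

end

/-- Structure of independent sets of size 4 in `G₃` (the graph on `ℕ³` where two triples
are adjacent iff they differ in all three coordinates; being independent means any two
points agree in some coordinate).  Either the set is coplanar (S1), or it has the shape
S2 or (up to a coordinate permutation) S3. -/
theorem stmt9 (I : Finset (Fin 3 → ℕ)) (hcard : I.card = 4)
    (hind : ∀ x ∈ I, ∀ y ∈ I, ∃ i : Fin 3, x i = y i) :
    -- (S1) coplanar
    (∃ (i : Fin 3) (a : ℕ), ∀ x ∈ I, x i = a) ∨
    -- (S2)
    (∃ a a' b b' c c' : ℕ, a ≠ a' ∧ b ≠ b' ∧ c ≠ c' ∧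
      (↑I : Set (Fin 3 → ℕ)) =
        {![a, b, c], ![a', b', c], ![a', b, c'], ![a, b', c']}) ∨
    -- (S3), up to a permutation of the coordinates
    (∃ (σ : Equiv.Perm (Fin 3)) (a a' b b' c c' t : ℕ), a ≠ a' ∧ b ≠ b' ∧ c ≠ c' ∧
      (↑I : Set (Fin 3 → ℕ)) =
        (fun v => v ∘ σ) '' {![a, b, c], ![a, b, c'], ![a, b', t], ![a', b, t]}) := by
  by_cases hthree : ∀ x ∈ I, ∀ y ∈ I, ∀ z ∈ I, ∀ i : Fin 3, y i = x i → z i = x i →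
      x = y ∨ x = z ∨ y = z
  · exact Or.inr (Or.inl (isS2_of_no_three_on_plane hcard hind hthree))
  push Not at hthree
  obtain ⟨x, hx, y, hy, z, hz, i, hyi, hzi, hxy, hxz, hyz⟩ := hthree
  exact (isS1_or_isS3_of_three_on_plane hcard hind hx hy hz hxy hxz hyz hyi hzi).imp_right
    Or.inr
end

section
/- Let I be an independent set of size 5 in the graph G₃. Then either I is contained in a plane {x : x_i = a}, or I is contained in the union of three lines all passing through a common point p, namely lines of the form {x : x_j = p_j, x_k = p_k} through p for the three pairs {j,k} of coordinates. -/
/-!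
Two distinct points `x, y` of `I` agreeing in two coordinates `j, k` force the structure. They
differ in the third coordinate `i`, so every other point agrees with them in `j` or in `k`. If
neither coordinate spans a plane, a point `a` off the `j`-plane and a point `b` off the `k`-plane
can only agree in coordinate `i`, and `p := (x j, x k)` completed by `a i = b i` is the common
point of the three lines. Among five points spanning no plane such a pair exists: one point agrees
with each of the other four in one of three coordinates, so it shares some coordinate `i` with two
of them, and a point off that `i`-plane agrees with these three in the two remaining coordinates,
hence two of them in the same one.
-/

namespace Fin

lemma exists_ne_and_ne (j k : Fin 3) : ∃ i, i ≠ j ∧ i ≠ k := by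
  revert j k; decide

lemma eq_or_eq_or_eq_of_ne {i j k : Fin 3} (hij : i ≠ j) (hik : i ≠ k) (hjk : j ≠ k)
    (l : Fin 3) : l = i ∨ l = j ∨ l = k := by
  revert i j k l; decide

end Fin

variable {α : Type*}

lemma apply_eq_of_exists_apply_eq {z w : Fin 3 → α} {i j k : Fin 3} (hij : i ≠ j) (hik : i ≠ k)
    (hjk : j ≠ k) (h : ∃ l, z l = w l) (hj : z j ≠ w j) (hk : z k ≠ w k) : z i = w i := by
  obtain ⟨l, hl⟩ := h
  rcases Fin.eq_or_eq_or_eq_of_ne hij hik hjk l with rfl | rfl | rfl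
  · exact hl
  · exact absurd hl hj
  · exact absurd hl hk

theorem plane_or_lines_of_apply_eq_apply_eq {I : Set (Fin 3 → α)}
    (hind : ∀ x ∈ I, ∀ y ∈ I, ∃ i, x i = y i) {x y : Fin 3 → α} (hx : x ∈ I) (hy : y ∈ I)
    (hxy : x ≠ y) {j k : Fin 3} (hjk : j ≠ k) (hj : x j = y j) (hk : x k = y k) :
    (∃ (i : Fin 3) (a : α), ∀ z ∈ I, z i = a) ∨
    (∃ p : Fin 3 → α, ∀ z ∈ I, ∃ i j : Fin 3, i ≠ j ∧ z i = p i ∧ z j = p j) := by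
  obtain ⟨i, hij, hik⟩ := Fin.exists_ne_and_ne j k
  have hi : x i ≠ y i := fun hi => hxy <| funext fun l => by
    rcases Fin.eq_or_eq_or_eq_of_ne hij hik hjk l with rfl | rfl | rfl <;> assumption
  have hcover : ∀ z ∈ I, z j = x j ∨ z k = x k := by
    intro z hz
    by_contra! h
    have hzx := apply_eq_of_exists_apply_eq hij hik hjk (hind z hz x hx) h.1 h.2
    have hzy := apply_eq_of_exists_apply_eq hij hik hjk (hind z hz y hy) (hj ▸ h.1) (hk ▸ h.2)
    exact hi (hzx.symm.trans hzy)
  by_cases hJ : ∀ z ∈ I, z j = x j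
  · exact Or.inl ⟨j, x j, hJ⟩
  by_cases hK : ∀ z ∈ I, z k = x k
  · exact Or.inl ⟨k, x k, hK⟩
  push Not at hJ hK
  obtain ⟨a, ha, haj⟩ := hJ
  obtain ⟨b, hb, hbk⟩ := hK
  have hak : a k = x k := (hcover a ha).resolve_left haj
  have hbj : b j = x j := (hcover b hb).resolve_right hbk
  have hab : a i = b i := apply_eq_of_exists_apply_eq hij hik hjk (hind a ha b hb)
    (fun h => haj (h.trans hbj)) (fun h => hbk (h.symm.trans hak))
  set p := Function.update x i (a i)
  have hpi : p i = a i := Function.update_self ..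
  have hpj : p j = x j := Function.update_of_ne hij.symm ..
  have hpk : p k = x k := Function.update_of_ne hik.symm ..
  refine Or.inr ⟨p, fun z hz => ?_⟩
  by_cases hzj : z j = x j <;> by_cases hzk : z k = x k
  · exact ⟨j, k, hjk, hzj.trans hpj.symm, hzk.trans hpk.symm⟩
  · have hza : z i = a i := apply_eq_of_exists_apply_eq hij hik hjk (hind z hz a ha)
      (fun h => haj (h.symm.trans hzj)) (fun h => hzk (h.trans hak))
    exact ⟨i, j, hij, hza.trans hpi.symm, hzj.trans hpj.symm⟩
  · have hzb : z i = b i := apply_eq_of_exists_apply_eq hij hik hjk (hind z hz b hb)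
      (fun h => hzj (h.trans hbj)) (fun h => hbk (h.symm.trans hzk))
    exact ⟨i, k, hik, hzb.trans (hab.symm.trans hpi.symm), hzk.trans hpk.symm⟩
  · exact absurd (hcover z hz) (by tauto)

theorem exists_three_apply_eq_of_four_lt_card {I : Finset (Fin 3 → α)}
    (hind : ∀ x ∈ I, ∀ y ∈ I, ∃ i, x i = y i) (hcard : 4 < I.card) :
    ∃ x ∈ I, ∃ y ∈ I, ∃ z ∈ I, x ≠ y ∧ x ≠ z ∧ y ≠ z ∧ ∃ i, y i = x i ∧ z i = x i := by
  classical
  obtain ⟨x, hx⟩ := Finset.card_pos.mp (by omega : 0 < I.card)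
  choose! f hf using hind x hx
  have hlt : (Finset.univ : Finset (Fin 3)).card < (I.erase x).card := by
    rw [Finset.card_erase_of_mem hx, Finset.card_univ, Fintype.card_fin]
    omega
  obtain ⟨y, hy, z, hz, hyz, hfyz⟩ :=
    Finset.exists_ne_map_eq_of_card_lt_of_maps_to hlt (f := f) fun _ _ => Finset.mem_univ _
  obtain ⟨hyx, hyI⟩ := Finset.mem_erase.mp hy
  obtain ⟨hzx, hzI⟩ := Finset.mem_erase.mp hz
  exact ⟨x, hx, y, hyI, z, hzI, hyx.symm, hzx.symm, hyz, f y, (hf y hyI).symm,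
    hfyz ▸ (hf z hzI).symm⟩

theorem exists_ne_apply_eq_of_two_lt_card {S : Finset (Fin 3 → α)} {i : Fin 3} {a : α}
    (hS : ∀ v ∈ S, v i = a) (hcard : 2 < S.card) {w : Fin 3 → α} (hwi : w i ≠ a)
    (hw : ∀ v ∈ S, ∃ l, w l = v l) : ∃ u ∈ S, ∃ v ∈ S, u ≠ v ∧ ∃ j, j ≠ i ∧ u j = v j := by
  classical
  choose! g hg using hw
  have hlt : ((Finset.univ : Finset (Fin 3)).erase i).card < S.card := by
    rw [Finset.card_erase_of_mem (Finset.mem_univ i), Finset.card_univ, Fintype.card_fin]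
    omega
  have hmaps : Set.MapsTo g S ((Finset.univ : Finset (Fin 3)).erase i) := fun v hv =>
    Finset.mem_erase.mpr
      ⟨fun hgi => hwi (by simpa only [hgi, hS v hv] using hg v hv), Finset.mem_univ _⟩
  obtain ⟨u, hu, v, hv, huv, hguv⟩ := Finset.exists_ne_map_eq_of_card_lt_of_maps_to hlt hmaps
  refine ⟨u, hu, v, hv, huv, g u, (Finset.mem_erase.mp (hmaps hu)).1, ?_⟩
  rw [← hg u hu, hguv, hg v hv]

theorem exists_ne_apply_eq_apply_eq_of_not_plane {I : Finset (Fin 3 → α)}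
    (hind : ∀ x ∈ I, ∀ y ∈ I, ∃ i, x i = y i) (hcard : 4 < I.card)
    (hplane : ¬ ∃ (i : Fin 3) (a : α), ∀ x ∈ I, x i = a) :
    ∃ x ∈ I, ∃ y ∈ I, x ≠ y ∧ ∃ j k : Fin 3, j ≠ k ∧ x j = y j ∧ x k = y k := by
  classical
  obtain ⟨x, hx, y, hy, z, hz, hxy, hxz, hyz, i, hyi, hzi⟩ :=
    exists_three_apply_eq_of_four_lt_card hind hcard
  push Not at hplane
  obtain ⟨w, hw, hwi⟩ := hplane i (x i)
  have hsub : ({x, y, z} : Finset _) ⊆ I := by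
    simp only [Finset.insert_subset_iff, Finset.singleton_subset_iff]
    exact ⟨hx, hy, hz⟩
  have hS : ∀ v ∈ ({x, y, z} : Finset _), v i = x i := by
    simp only [Finset.mem_insert, Finset.mem_singleton]
    rintro v (rfl | rfl | rfl) <;> first | rfl | assumption
  have hcard3 : 2 < ({x, y, z} : Finset _).card := by
    rw [Finset.card_eq_three.mpr ⟨x, y, z, hxy, hxz, hyz, rfl⟩]
    omega
  obtain ⟨u, hu, v, hv, huv, j, hji, huvj⟩ := exists_ne_apply_eq_of_two_lt_card hS hcard3 hwi
    fun v hv => hind w hw v (hsub hv)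
  exact ⟨u, hsub hu, v, hsub hv, huv, i, j, hji.symm, (hS u hu).trans (hS v hv).symm, huvj⟩

/-- Structure of independent sets of size 5 in `G₃` (any two points agree in some
coordinate): either the set is coplanar, or it lies in the union of the three
axis-parallel lines through a common point `p` (i.e. every point of the set agrees
with `p` in at least two coordinates). -/
theorem stmt10 (I : Finset (Fin 3 → ℕ)) (hcard : I.card = 5)
    (hind : ∀ x ∈ I, ∀ y ∈ I, ∃ i : Fin 3, x i = y i) :
    (∃ (i : Fin 3) (a : ℕ), ∀ x ∈ I, x i = a) ∨
    (∃ p : Fin 3 → ℕ, ∀ x ∈ I, ∃ i j : Fin 3, i ≠ j ∧ x i = p i ∧ x j = p j) := by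
  by_cases hplane : ∃ (i : Fin 3) (a : ℕ), ∀ x ∈ I, x i = a
  · exact Or.inl hplane
  obtain ⟨x, hx, y, hy, hxy, j, k, hjk, hj, hk⟩ :=
    exists_ne_apply_eq_apply_eq_of_not_plane hind (by omega) hplane
  exact plane_or_lines_of_apply_eq_apply_eq (I := (I : Set (Fin 3 → ℕ))) hind hx hy hxy hjk hj hk
end

section
/- The following two statements are equivalent for k = l+1: (A) For every k-colouring of the edges of K_n there exist vertex sets A₁,...,A_{k−1} covering all vertices and colours c₁,...,c_{k−1} such that each K_n[A_i, c_i] is connected. (B) For every finite set X ⊆ ℕ^l there exist sets X₁,...,X_l ⊆ X covering X such that each X_i is either contained in a hyperplane {x : x_i = c} for some coordinate i and value c, or the induced subgraph G_l[X_i] is connected. -/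
/-!
(A) ⇒ (B): enumerate `X` and colour the edge between two points by a coordinate in which they
agree, or by the extra colour `l` if they differ everywhere. A monochromatic connected set of
colour `j < l` then lies in a hyperplane `x_j = c`, and one of colour `l` maps onto a connected
set of `G_l`.

(B) ⇒ (A): send each vertex to the tuple of its components in the colours `0, …, l - 1`. Vertices
with `G_l`-adjacent images are joined by an edge of colour `l`, so the preimage of a connected
piece with at least two points is connected in colour `l`, while the preimage of a piece in a
hyperplane `x_j = c` is a single component of colour `j`. One-point pieces lie in a hyperplane.
-/

open SimpleGraph Function

namespace SimpleGraph

variable {V W : Type*} {G : SimpleGraph V} {H : SimpleGraph W}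

lemma Preconnected.exists_forall_eq_of_adj {β : Type*} [Nonempty β] {A : Set V}
    (hA : (G.induce A).Preconnected) {g : V → β} (hg : ∀ u v, G.Adj u v → g u = g v) :
    ∃ b, ∀ a ∈ A, g a = b := by
  rcases A.eq_empty_or_nonempty with rfl | ⟨a₀, ha₀⟩
  · exact ⟨Classical.arbitrary β, by simp⟩
  suffices h : ∀ x y : A, (G.induce A).Reachable x y → g x = g y from
    ⟨g a₀, fun a ha => h ⟨a, ha⟩ ⟨a₀, ha₀⟩ (hA _ _)⟩
  intro x y hxy
  rw [reachable_iff_reflTransGen] at hxy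
  induction hxy with
  | refl => rfl
  | tail _ hadj ih => exact ih.trans (hg _ _ hadj)

lemma Preconnected.induce_image {A : Set V} (hA : (G.induce A).Preconnected) (f : V → W)
    (hf : ∀ u v, G.Adj u v → H.Adj (f u) (f v)) : (H.induce (f '' A)).Preconnected := by
  let φ : G.induce A →g H.induce (f '' A) :=
    { toFun := fun a => ⟨f a, Set.mem_image_of_mem f a.2⟩
      map_rel' := fun h => hf _ _ h }
  refine hA.map φ ?_
  rintro ⟨_, a, ha, rfl⟩
  exact ⟨⟨a, ha⟩, rfl⟩

/-- Adjacency in `H` lifts to every pair of preimages; the fibre over a point of `S` is joined up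
through any neighbour, which exists because `S` is preconnected with at least two points. -/
lemma Preconnected.induce_preimage {S : Set W} (hS : (H.induce S).Preconnected)
    (hS₂ : S.Nontrivial) {f : V → W} (hSf : S ⊆ Set.range f)
    (hf : ∀ u v, H.Adj (f u) (f v) → G.Adj u v) : (G.induce (f ⁻¹' S)).Preconnected := by
  let Joined (x y : S) : Prop := ∀ u v : f ⁻¹' S, f u = x → f v = y →
    (G.induce (f ⁻¹' S)).Reachable u v
  have joined_of_adj {x y : S} (h : (H.induce S).Adj x y) : Joined x y := by
    rintro u v hu hv
    exact Adj.reachable (hf u v (by rwa [hu, hv]))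
  have joined_trans {x y z : S} (hxy : Joined x y) (hyz : Joined y z) : Joined x z := by
    intro u v hu hv
    obtain ⟨w, hw⟩ := hSf y.2
    exact (hxy u ⟨w, by simp [hw]⟩ hu hw).trans (hyz _ v hw hv)
  have joined_refl (x : S) : Joined x x := by
    obtain ⟨y, hy, hyx⟩ := hS₂.exists_ne x
    obtain ⟨p⟩ := hS x ⟨y, hy⟩
    have hadj := p.adj_snd (Walk.not_nil_of_ne fun h => hyx (congrArg Subtype.val h).symm)
    exact joined_trans (joined_of_adj hadj) (joined_of_adj hadj.symm)
  have joined_of_reachable {x y : S} (h : (H.induce S).Reachable x y) : Joined x y := by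
    rw [reachable_iff_reflTransGen] at h
    induction h with
    | refl => exact joined_refl x
    | tail _ hadj ih => exact joined_trans ih (joined_of_adj hadj)
  intro u v
  exact joined_of_reachable (hS ⟨f u, u.2⟩ ⟨f v, v.2⟩) u v rfl rfl

lemma preconnected_induce_setOf_eq {β : Type*} {e : G.ConnectedComponent → β} (he : Injective e)
    (b : β) : (G.induce {v | e (G.connectedComponentMk v) = b}).Preconnected := by
  by_cases hb : ∃ C, e C = b
  · obtain ⟨C, rfl⟩ := hb
    have hsupp : {v | e (G.connectedComponentMk v) = e C} = C.supp := by
      ext v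
      simp [he.eq_iff, ConnectedComponent.mem_supp_iff]
    rw [hsupp]
    exact (ConnectedComponent.maximal_connected_induce_supp C).prop.preconnected
  · rintro ⟨u, hu⟩
    exact absurd ⟨_, hu⟩ hb

noncomputable def componentIndex {n : ℕ} {G : SimpleGraph (Fin n)} (C : G.ConnectedComponent) :
    ℕ :=
  C.out

lemma componentIndex_injective {n : ℕ} {G : SimpleGraph (Fin n)} :
    Injective (componentIndex (G := G)) :=
  Fin.val_injective.comp (LeftInverse.injective Quot.out_eq)

end SimpleGraph

def InHyperplane {l : ℕ} {α : Type*} (S : Set (Fin l → α)) : Prop :=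
  ∃ (j : Fin l) (c : α), ∀ x ∈ S, x j = c

lemma Set.Subsingleton.inHyperplane {l : ℕ} {α : Type*} [Nonempty α] {S : Set (Fin l → α)}
    (hS : S.Subsingleton) (j : Fin l) : InHyperplane S := by
  rcases S.eq_empty_or_nonempty with rfl | ⟨x, hx⟩
  · exact ⟨j, Classical.arbitrary α, by simp⟩
  · exact ⟨j, x j, fun y hy => by rw [hS hy hx]⟩

section ColouringOfPoints

variable {V α : Type*} {l : ℕ} {φ : V → Fin l → α} {a b : V}

noncomputable def agreementColouring (φ : V → Fin l → α) (e : Sym2 V) : Fin (l + 1) :=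
  open Classical in
  if h : ∃ j, ∀ a ∈ e, ∀ b ∈ e, φ a j = φ b j then (Classical.choose h).castSucc else Fin.last l

lemma agreementColouring_mk_eq_castSucc {j : Fin l}
    (h : agreementColouring φ s(a, b) = j.castSucc) : φ a j = φ b j := by
  unfold agreementColouring at h
  split_ifs at h with hagree
  · rw [Fin.castSucc_inj] at h
    subst h
    exact Classical.choose_spec hagree a (Sym2.mem_mk_left a b) b (Sym2.mem_mk_right a b)
  · exact absurd h (Fin.castSucc_lt_last j).ne'

lemma agreementColouring_mk_eq_last (h : agreementColouring φ s(a, b) = Fin.last l) (j : Fin l) :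
    φ a j ≠ φ b j := by
  unfold agreementColouring at h
  split_ifs at h with hagree
  · exact absurd h (Fin.castSucc_lt_last _).ne
  · intro hj
    refine hagree ⟨j, fun x hx y hy => ?_⟩
    rw [Sym2.mem_iff] at hx hy
    rcases hx with rfl | rfl <;> rcases hy with rfl | rfl <;> simp [hj]

end ColouringOfPoints

lemma inHyperplane_or_preconnected_image {n l : ℕ} {φ : Fin n → Fin l → ℕ} (hφ : Injective φ)
    {A : Set (Fin n)} {c : Fin (l + 1)}
    (hA : ((monoGraph (agreementColouring φ) c).induce A).Preconnected) :
    InHyperplane (φ '' A) ∨ ((Gl l).induce (φ '' A)).Preconnected := by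
  rcases Fin.eq_castSucc_or_eq_last c with ⟨j, rfl⟩ | rfl
  · obtain ⟨b, hb⟩ := hA.exists_forall_eq_of_adj (g := fun a => φ a j)
      fun _ _ h => agreementColouring_mk_eq_castSucc h.2
    exact Or.inl ⟨j, b, by rintro _ ⟨a, ha, rfl⟩; exact hb a ha⟩
  · exact Or.inr <| hA.induce_image φ fun _ _ h => ⟨hφ.ne h.1, agreementColouring_mk_eq_last h.2⟩

section ComponentProfile

variable {n l : ℕ} (χ : Sym2 (Fin n) → Fin (l + 1))

noncomputable def componentProfile (v : Fin n) (j : Fin l) : ℕ :=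
  componentIndex ((monoGraph χ j.castSucc).connectedComponentMk v)

variable {χ}

/-- An edge of colour `j < l` would put its endpoints in one component of colour `j`. -/
lemma monoGraph_last_adj_of_gl_adj {u v : Fin n}
    (h : (Gl l).Adj (componentProfile χ u) (componentProfile χ v)) :
    (monoGraph χ (Fin.last l)).Adj u v := by
  refine ⟨fun huv => h.1 (huv ▸ rfl), ?_⟩
  by_contra hlast
  obtain ⟨j, hj⟩ := Fin.exists_castSucc_eq.mpr hlast
  have hadj : (monoGraph χ j.castSucc).Adj u v := ⟨fun huv => h.1 (huv ▸ rfl), hj.symm⟩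
  exact h.2 j (congrArg componentIndex (ConnectedComponent.connectedComponentMk_eq_of_adj hadj))

lemma exists_monoGraph_preconnected_of_piece {S : Set (Fin l → ℕ)}
    (hS : S ⊆ Set.range (componentProfile χ))
    (hpiece : InHyperplane S ∨ S.Nontrivial ∧ ((Gl l).induce S).Preconnected) :
    ∃ (A : Set (Fin n)) (c : Fin (l + 1)),
      componentProfile χ ⁻¹' S ⊆ A ∧ ((monoGraph χ c).induce A).Preconnected := by
  rcases hpiece with ⟨j, cv, hj⟩ | ⟨hS₂, hconn⟩
  · exact ⟨{v | componentProfile χ v j = cv}, j.castSucc, fun v hv => hj _ hv,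
      preconnected_induce_setOf_eq componentIndex_injective cv⟩
  · exact ⟨_, Fin.last l, subset_rfl,
      hconn.induce_preimage hS₂ hS fun _ _ => monoGraph_last_adj_of_gl_adj⟩

end ComponentProfile

theorem stmt11_general (l : ℕ) :
    (∀ (n : ℕ) (χ : Sym2 (Fin n) → Fin (l + 1)),
      ∃ (A : Fin l → Set (Fin n)) (c : Fin l → Fin (l + 1)),
        (∀ v, ∃ i, v ∈ A i) ∧
        ∀ i, ((monoGraph χ (c i)).induce (A i)).Preconnected) ↔
    (∀ X : Finset (Fin l → ℕ),
      ∃ Xs : Fin l → Set (Fin l → ℕ),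
        (∀ i, Xs i ⊆ ↑X) ∧ (∀ x ∈ X, ∃ i, x ∈ Xs i) ∧
        ∀ i, (∃ (j : Fin l) (cv : ℕ), ∀ x ∈ Xs i, x j = cv) ∨
          ((Gl l).induce (Xs i)).Preconnected) := by
  constructor
  · intro hA X
    let φ : Fin X.card → Fin l → ℕ := fun a => X.equivFin.symm a
    have hφ : Injective φ := Subtype.val_injective.comp X.equivFin.symm.injective
    obtain ⟨A, c, hcover, hconn⟩ := hA X.card (agreementColouring φ)
    refine ⟨fun i => φ '' A i, ?_, fun x hx => ?_,
      fun i => inHyperplane_or_preconnected_image hφ (hconn i)⟩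
    · rintro i _ ⟨a, -, rfl⟩
      exact (X.equivFin.symm a).2
    · obtain ⟨i, hi⟩ := hcover (X.equivFin ⟨x, hx⟩)
      exact ⟨i, _, hi, by simp [φ]⟩
  · intro hB n χ
    obtain ⟨Xs, hsub, hcover, hpiece⟩ := hB (Finset.univ.image (componentProfile χ))
    have hsub' (i : Fin l) : Xs i ⊆ Set.range (componentProfile χ) := by
      simpa using hsub i
    choose A c hA hconn using fun i => exists_monoGraph_preconnected_of_piece (hsub' i) <|
      (hpiece i).elim Or.inl fun h =>
        (Xs i).subsingleton_or_nontrivial.imp (·.inHyperplane i) (⟨·, h⟩)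
    refine ⟨A, c, fun v => ?_, hconn⟩
    obtain ⟨i, hi⟩ := hcover _ (Finset.mem_image_of_mem _ (Finset.mem_univ v))
    exact ⟨i, hA i hi⟩

/-- Equivalence, for `k = l + 1`, between:
(A) every `k`-colouring of `E(Kₙ)` admits a cover of the vertices by `k - 1 = l`
monochromatic connected sets; and
(B) every finite `X ⊆ ℕ^l` can be covered by `l` subsets, each contained in a
hyperplane `{x : x j = c}` or inducing a connected subgraph of `G_l`. -/
theorem stmt11 (l : ℕ) (hl : 1 ≤ l) :
    (∀ (n : ℕ) (χ : Sym2 (Fin n) → Fin (l + 1)),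
      ∃ (A : Fin l → Set (Fin n)) (c : Fin l → Fin (l + 1)),
        (∀ v, ∃ i, v ∈ A i) ∧
        ∀ i, ((monoGraph χ (c i)).induce (A i)).Preconnected) ↔
    (∀ X : Finset (Fin l → ℕ),
      ∃ Xs : Fin l → Set (Fin l → ℕ),
        (∀ i, Xs i ⊆ ↑X) ∧ (∀ x ∈ X, ∃ i, x ∈ Xs i) ∧
        ∀ i, (∃ (j : Fin l) (cv : ℕ), ∀ x ∈ Xs i, x j = cv) ∨
          ((Gl l).induce (Xs i)).Preconnected) :=
  stmt11_general l
end

section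
/- If three points p, q, r of a finite set X ⊆ ℕ³ lie on a common line and belong to three pairwise distinct connected components of the induced subgraph G₃[X], then X can be covered by two planes: there exist two coordinates i, j and values a, b such that every x ∈ X satisfies x_i = a or x_j = b. -/
/-!
Let the line through `p, q, r` be `{x_i = a, x_j = b}` and let `k` be the remaining coordinate;
then `p k, q k, r k` are pairwise distinct. A point `x ∈ X` outside both planes `x_i = a` and
`x_j = b` differs from at least two of `p, q, r` in coordinate `k`, hence in every coordinate,
so it is a common neighbour of two of them in `G₃[X]` and joins their components.
-/

lemma Fin.three_eq_or_eq_or_eq {i j k : Fin 3} (hij : i ≠ j) (hik : i ≠ k) (hjk : j ≠ k)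
    (m : Fin 3) : m = i ∨ m = j ∨ m = k := by
  revert i j k m
  decide

lemma SimpleGraph.induce_reachable_of_adj_of_adj {V : Type*} {G : SimpleGraph V} {X : Set V}
    {x s t : V} (hx : x ∈ X) (hs : s ∈ X) (ht : t ∈ X) (hxs : G.Adj x s) (hxt : G.Adj x t) :
    (G.induce X).Reachable ⟨s, hs⟩ ⟨t, ht⟩ :=
  (show (G.induce X).Adj ⟨x, hx⟩ ⟨s, hs⟩ from hxs).reachable.symm.trans
    (show (G.induce X).Adj ⟨x, hx⟩ ⟨t, ht⟩ from hxt).reachable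

lemma Gl_adj_iff {l : ℕ} [NeZero l] {x y : Fin l → ℕ} : (Gl l).Adj x y ↔ ∀ i, x i ≠ y i :=
  ⟨And.right, fun h => ⟨fun hxy => h 0 (congrFun hxy 0), h⟩⟩

section ThreeCoordinates

variable {i j k : Fin 3}

lemma Gl_three_adj_of_ne (hij : i ≠ j) (hik : i ≠ k) (hjk : j ≠ k) {x y : Fin 3 → ℕ}
    (hi : x i ≠ y i) (hj : x j ≠ y j) (hk : x k ≠ y k) : (Gl 3).Adj x y :=
  Gl_adj_iff.2 fun m => by
    rcases Fin.three_eq_or_eq_or_eq hij hik hjk m with rfl | rfl | rfl <;> assumption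

lemma ne_apply_of_ne_of_eq_of_eq (hij : i ≠ j) (hik : i ≠ k) (hjk : j ≠ k) {s t : Fin 3 → ℕ}
    (hst : s ≠ t) (hi : s i = t i) (hj : s j = t j) : s k ≠ t k := fun hk =>
  hst <| funext fun m => by
    rcases Fin.three_eq_or_eq_or_eq hij hik hjk m with rfl | rfl | rfl <;> assumption

lemma reachable_of_not_mem_planes (hij : i ≠ j) (hik : i ≠ k) (hjk : j ≠ k)
    {X : Set (Fin 3 → ℕ)} {p q r x : Fin 3 → ℕ} (hp : p ∈ X) (hq : q ∈ X) (hr : r ∈ X)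
    (hx : x ∈ X) (hqi : q i = p i) (hqj : q j = p j) (hri : r i = p i) (hrj : r j = p j)
    (hpq : p k ≠ q k) (hpr : p k ≠ r k) (hqr : q k ≠ r k) (hxi : x i ≠ p i) (hxj : x j ≠ p j) :
    ((Gl 3).induce X).Reachable ⟨p, hp⟩ ⟨q, hq⟩ ∨ ((Gl 3).induce X).Reachable ⟨p, hp⟩ ⟨r, hr⟩ ∨
      ((Gl 3).induce X).Reachable ⟨q, hq⟩ ⟨r, hr⟩ := by
  have adj : ∀ s : Fin 3 → ℕ, s i = p i → s j = p j → x k ≠ s k → (Gl 3).Adj x s :=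
    fun s hsi hsj => Gl_three_adj_of_ne hij hik hjk (hsi ▸ hxi) (hsj ▸ hxj)
  have adj_p := adj p rfl rfl
  have adj_q := adj q hqi hqj
  have adj_r := adj r hri hrj
  by_cases hxp : x k = p k
  · exact .inr <| .inr <| SimpleGraph.induce_reachable_of_adj_of_adj hx hq hr
      (adj_q (hxp ▸ hpq)) (adj_r (hxp ▸ hpr))
  by_cases hxq : x k = q k
  · exact .inr <| .inl <| SimpleGraph.induce_reachable_of_adj_of_adj hx hp hr
      (adj_p hxp) (adj_r (hxq ▸ hqr))
  · exact .inl <| SimpleGraph.induce_reachable_of_adj_of_adj hx hp hq (adj_p hxp) (adj_q hxq)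

end ThreeCoordinates

theorem stmt12_general (X : Set (Fin 3 → ℕ)) (p q r : Fin 3 → ℕ)
    (hp : p ∈ X) (hq : q ∈ X) (hr : r ∈ X)
    (hline : ∃ i j : Fin 3, i ≠ j ∧ p i = q i ∧ q i = r i ∧ p j = q j ∧ q j = r j)
    (hpq : ¬ ((Gl 3).induce X).Reachable ⟨p, hp⟩ ⟨q, hq⟩)
    (hpr : ¬ ((Gl 3).induce X).Reachable ⟨p, hp⟩ ⟨r, hr⟩)
    (hqr : ¬ ((Gl 3).induce X).Reachable ⟨q, hq⟩ ⟨r, hr⟩) :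
    ∃ (i j : Fin 3) (a b : ℕ), ∀ x ∈ X, x i = a ∨ x j = b := by
  obtain ⟨i, j, hij, hpqi, hqri, hpqj, hqrj⟩ := hline
  have ne_of_not_reachable {s t : Fin 3 → ℕ} {hs : s ∈ X} {ht : t ∈ X}
      (h : ¬ ((Gl 3).induce X).Reachable ⟨s, hs⟩ ⟨t, ht⟩) : s ≠ t := by
    rintro rfl
    exact h .rfl
  obtain ⟨k, hk⟩ := Function.ne_iff.mp (ne_of_not_reachable hpq)
  have hik : i ≠ k := fun h => hk (h ▸ hpqi)
  have hjk : j ≠ k := fun h => hk (h ▸ hpqj)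
  have third_ne := @ne_apply_of_ne_of_eq_of_eq i j k hij hik hjk
  refine ⟨i, j, p i, p j, fun x hx => ?_⟩
  by_contra! ⟨hxi, hxj⟩
  rcases reachable_of_not_mem_planes hij hik hjk hp hq hr hx hpqi.symm hpqj.symm
    (hpqi.trans hqri).symm (hpqj.trans hqrj).symm hk
    (third_ne (ne_of_not_reachable hpr) (hpqi.trans hqri) (hpqj.trans hqrj))
    (third_ne (ne_of_not_reachable hqr) hqri hqrj) hxi hxj with h | h | h
  exacts [hpq h, hpr h, hqr h]

/-- If three points of a finite `X ⊆ ℕ³` lie on a common line but lie in three pairwise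
distinct connected components of the induced subgraph `G₃[X]`, then `X` is covered by
two planes. -/
theorem stmt12 (X : Set (Fin 3 → ℕ)) (hfin : X.Finite) (p q r : Fin 3 → ℕ)
    (hp : p ∈ X) (hq : q ∈ X) (hr : r ∈ X)
    (hline : ∃ i j : Fin 3, i ≠ j ∧ p i = q i ∧ q i = r i ∧ p j = q j ∧ q j = r j)
    (hpq : ¬ ((Gl 3).induce X).Reachable ⟨p, hp⟩ ⟨q, hq⟩)
    (hpr : ¬ ((Gl 3).induce X).Reachable ⟨p, hp⟩ ⟨r, hr⟩)
    (hqr : ¬ ((Gl 3).induce X).Reachable ⟨q, hq⟩ ⟨r, hr⟩) :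
    ∃ (i j : Fin 3) (a b : ℕ), ∀ x ∈ X, x i = a ∨ x j = b :=
  stmt12_general X p q r hp hq hr hline hpq hpr hqr
end

section
/- Let χ be a 4-colouring of E(K_n) with colours c ≠ c'. Suppose C is a connected component of the colour-c subgraph and C' is a connected component of the colour-c' subgraph with C ∩ C' = ∅ and C' nonempty, and suppose that the colouring admits no cover of the vertices by three monochromatic connected subgraphs of diameter at most 160. Then for every pair of vertices x, y ∈ C, either d_c(x,y) ≤ 6 or d_{c'}(x,y) ≤ 6. -/
/-!
Let `α = χ s(x, y)`, which is neither `c` nor `c'`, and let `β` be the fourth colour. An edge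
from the `c`-component of `x` to the `c'`-component `C'` has colour `α` or `β`. For `v ∈ C'`,
every vertex `w ∉ {x, y, v}` sends an `α`- or `β`-edge to `x`, `y` or `v`: if `vw` has colour
`c'` then `w ∈ C'`, and if it has colour `c` then `w` lies outside the `c`-component of `x`, so
`xw` and `yw` cannot both avoid `α` and `β` without forming a `c'`-path `x w y`. Hence three
monochromatic balls of radius 2, of diameter at most 4, cover all vertices: centred among `x`, `y`
and `v` if some `yv` with `v ∈ C'` has colour `β`; otherwise every `c'`-neighbour of `v` is an
`α`-neighbour of `y`, and the balls `B_α(y)`, `B_β(v)`, `B_c(v)` suffice.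
-/

namespace SimpleGraph

variable {V : Type*} {G H : SimpleGraph V}

lemma exists_walk_induce_ball {c v : V} {r : ℕ∞} (hc : c ∈ G.ball c r) (hv : v ∈ G.ball c r) :
    ∃ p : (G.induce (G.ball c r)).Walk ⟨c, hc⟩ ⟨v, hv⟩, (p.length : ℕ∞) = G.edist v c := by
  classical
  rw [mem_ball, edist_comm] at hv
  obtain ⟨p, hp⟩ := exists_walk_of_edist_ne_top (hv.trans_le le_top).ne
  have hsupp : ∀ u ∈ p.support, u ∈ G.ball c r := fun u hu ↦ by
    rw [mem_ball, edist_comm]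
    calc G.edist c u ≤ (p.takeUntil u hu).length := (p.takeUntil u hu).edist_le
      _ ≤ p.length := by exact_mod_cast p.length_takeUntil_le_length hu
      _ < r := hp ▸ hv
  have hlen := congrArg Walk.length (p.map_induce hsupp)
  rw [Walk.length_map] at hlen
  exact ⟨p.induce _ hsupp, (congrArg _ hlen).trans (hp.trans edist_comm)⟩

lemma preconnected_induce_ball (c : V) (r : ℕ∞) : (G.induce (G.ball c r)).Preconnected := by
  rintro ⟨u, hu⟩ ⟨v, hv⟩
  have hc : c ∈ G.ball c r := mem_ball_self (pos_of_gt hu)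
  obtain ⟨p, -⟩ := exists_walk_induce_ball hc hu
  obtain ⟨q, -⟩ := exists_walk_induce_ball hc hv
  exact p.reachable.symm.trans q.reachable

lemma dist_induce_ball_le (c : V) (r : ℕ) (u v : G.ball c (r + 1)) :
    (G.induce (G.ball c (r + 1))).dist u v ≤ 2 * r := by
  have hc : c ∈ G.ball c (r + 1) := mem_ball_self (by simp)
  have length_le {w : G.ball c (r + 1)}
      (p : (G.induce (G.ball c (r + 1))).Walk ⟨c, hc⟩ w) (hp : (p.length : ℕ∞) = G.edist w c) :
      p.length ≤ r := by
    have := w.2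
    rw [mem_ball, ← hp] at this
    exact Order.lt_add_one_iff.mp (by exact_mod_cast this)
  obtain ⟨p, hp⟩ := exists_walk_induce_ball hc u.2
  obtain ⟨q, hq⟩ := exists_walk_induce_ball hc v.2
  calc (G.induce (G.ball c (r + 1))).dist u v ≤ (p.reverse.append q).length := dist_le _
    _ = p.length + q.length := by simp
    _ ≤ 2 * r := by linarith [length_le p hp, length_le q hq]

lemma mem_ball_of_walk {c v : V} {r : ℕ∞} (p : G.Walk c v) (hp : p.length < r) :
    v ∈ G.ball c r := by
  rw [mem_ball, edist_comm]
  exact (edist_le p).trans_lt hp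

lemma mem_ball_three_of_adj {c v : V} (h : G.Adj c v) : v ∈ G.ball c 3 :=
  mem_ball_of_walk h.toWalk (by norm_num)

lemma mem_ball_three_of_adj_adj {c u v : V} (h : G.Adj c u) (h' : G.Adj u v) :
    v ∈ G.ball c 3 :=
  mem_ball_of_walk (.cons h h'.toWalk) (by norm_num)

def IsDominating (G : SimpleGraph V) (S : Set V) : Prop :=
  ∀ w ∉ S, ∃ u ∈ S, G.Adj u w

lemma ball_union_ball_union_ball_eq_univ {a b d : V} (hdom : (G ⊔ H).IsDominating {a, b, d})
    (hab : G.Adj a b) (had : G.Adj a d) (hbd : H.Adj b d) :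
    G.ball a 3 ∪ H.ball b 3 ∪ H.ball a 3 = Set.univ := by
  refine Set.eq_univ_of_forall fun w ↦ ?_
  by_cases hw : w ∈ ({a, b, d} : Set V)
  · rcases hw with rfl | rfl | rfl
    · exact .inl (.inl (mem_ball_self (by norm_num)))
    · exact .inl (.inl (mem_ball_three_of_adj hab))
    · exact .inl (.inl (mem_ball_three_of_adj had))
  obtain ⟨u, hu, h | h⟩ := hdom w hw <;> rcases hu with rfl | rfl | rfl
  · exact .inl (.inl (mem_ball_three_of_adj h))
  · exact .inl (.inl (mem_ball_three_of_adj_adj hab h))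
  · exact .inl (.inl (mem_ball_three_of_adj_adj had h))
  · exact .inr (mem_ball_three_of_adj h)
  · exact .inl (.inr (mem_ball_three_of_adj h))
  · exact .inl (.inr (mem_ball_three_of_adj_adj hbd h))

end SimpleGraph

open SimpleGraph

lemma exists_fourth_colour {c c' α : Fin 4} (hcc' : c ≠ c') (hαc : α ≠ c) (hαc' : α ≠ c') :
    ∃ β, ∀ e : Fin 4, e = c ∨ e = c' ∨ e = α ∨ e = β := by
  revert c c' α
  decide

section Colouring

variable {n : ℕ} {χ : Sym2 (Fin n) → Fin 4} {c c' α β : Fin 4} {x y v : Fin n}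

lemma sup_adj_of_colour_ne (hall : ∀ e : Fin 4, e = c ∨ e = c' ∨ e = α ∨ e = β) {u w : Fin n}
    (huw : u ≠ w) (hc : χ s(u, w) ≠ c) (hc' : χ s(u, w) ≠ c') :
    (monoGraph χ α ⊔ monoGraph χ β).Adj u w := by
  rcases hall (χ s(u, w)) with h | h | h | h
  · exact absurd h hc
  · exact absurd h hc'
  · exact .inl ⟨huw, h⟩
  · exact .inr ⟨huw, h⟩

lemma sup_adj_of_reachable (hall : ∀ e : Fin 4, e = c ∨ e = c' ∨ e = α ∨ e = β)
    (hsep : ∀ u, (monoGraph χ c).Reachable x u → ¬(monoGraph χ c').Reachable v u) {u w : Fin n}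
    (hu : (monoGraph χ c).Reachable x u) (hw : (monoGraph χ c').Reachable v w) :
    (monoGraph χ α ⊔ monoGraph χ β).Adj u w := by
  have huw : u ≠ w := fun h ↦ hsep u hu (h ▸ hw)
  refine sup_adj_of_colour_ne hall huw (fun h ↦ ?_) (fun h ↦ ?_)
  · exact hsep w (hu.trans (Adj.reachable ⟨huw, h⟩)) hw
  · exact hsep u hu (hw.trans (Adj.reachable ⟨huw.symm, by rwa [Sym2.eq_swap]⟩))

lemma isDominating_sup_monoGraph (hall : ∀ e : Fin 4, e = c ∨ e = c' ∨ e = α ∨ e = β)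
    (hsep : ∀ u, (monoGraph χ c).Reachable x u → ¬(monoGraph χ c').Reachable v u)
    (hxy : (monoGraph χ c).Reachable x y) (hc' : ∀ p : (monoGraph χ c').Walk x y, 2 < p.length) :
    (monoGraph χ α ⊔ monoGraph χ β).IsDominating {x, y, v} := by
  intro w hw
  simp only [Set.mem_insert_iff, Set.mem_singleton_iff, not_or] at hw
  obtain ⟨hxw, hyw, hvw⟩ := hw
  rcases hall (χ s(v, w)) with hvc | hvc' | hvα | hvβ
  · have hw : ¬(monoGraph χ c).Reachable x w := fun h ↦ hsep v
      (h.trans (Adj.reachable ⟨hvw, by rwa [Sym2.eq_swap]⟩)) .rfl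
    by_cases hxc' : χ s(x, w) = c'
    · refine ⟨y, by simp, sup_adj_of_colour_ne hall (Ne.symm hyw)
        (fun h ↦ hw (hxy.trans (Adj.reachable ⟨Ne.symm hyw, h⟩))) fun h ↦ ?_⟩
      have hwy : (monoGraph χ c').Adj w y := ⟨hyw, by rwa [Sym2.eq_swap]⟩
      have : 2 < 2 := hc' (.cons ⟨Ne.symm hxw, hxc'⟩ (.cons hwy .nil))
      omega
    · exact ⟨x, by simp, sup_adj_of_colour_ne hall (Ne.symm hxw)
        (fun h ↦ hw (Adj.reachable ⟨Ne.symm hxw, h⟩)) hxc'⟩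
  · exact ⟨x, by simp, sup_adj_of_reachable hall hsep .rfl (Adj.reachable ⟨Ne.symm hvw, hvc'⟩)⟩
  · exact ⟨v, by simp, .inl ⟨Ne.symm hvw, hvα⟩⟩
  · exact ⟨v, by simp, .inr ⟨Ne.symm hvw, hvβ⟩⟩

lemma ball_union_ball_union_ball_eq_univ_of_forall_adj
    (hall : ∀ e : Fin 4, e = c ∨ e = c' ∨ e = α ∨ e = β) (hyv : (monoGraph χ α).Adj y v)
    (hvy : ∀ w, (monoGraph χ c').Adj v w → (monoGraph χ α).Adj y w) :
    (monoGraph χ α).ball y 3 ∪ (monoGraph χ β).ball v 3 ∪ (monoGraph χ c).ball v 3 =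
      Set.univ := by
  refine Set.eq_univ_of_forall fun w ↦ ?_
  by_cases hvw : v = w
  · exact .inl (.inr (hvw ▸ mem_ball_self (by norm_num)))
  rcases hall (χ s(v, w)) with h | h | h | h
  · exact .inr (mem_ball_three_of_adj ⟨hvw, h⟩)
  · exact .inl (.inl (mem_ball_three_of_adj (hvy w ⟨hvw, h⟩)))
  · exact .inl (.inl (mem_ball_three_of_adj_adj hyv ⟨hvw, h⟩))
  · exact .inl (.inr (mem_ball_three_of_adj ⟨hvw, h⟩))

lemma exists_ball_union_ball_union_ball_eq_univ (hcc' : c ≠ c')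
    (hc : ¬(monoGraph χ c).Adj x y) (hc' : ∀ p : (monoGraph χ c').Walk x y, 2 < p.length)
    (hxy : (monoGraph χ c).Reachable x y)
    (hsep : ∀ u, (monoGraph χ c).Reachable x u → ¬(monoGraph χ c').Reachable v u) :
    ∃ (e₁ e₂ e₃ : Fin 4) (t₁ t₂ t₃ : Fin n),
      (monoGraph χ e₁).ball t₁ 3 ∪ (monoGraph χ e₂).ball t₂ 3 ∪ (monoGraph χ e₃).ball t₃ 3 =
        Set.univ := by
  have hxy' : x ≠ y := by
    rintro rfl
    simpa using hc' .nil
  have hαc' : χ s(x, y) ≠ c' := fun h ↦ by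
    have : 2 < 1 := hc' (.cons ⟨hxy', h⟩ .nil)
    omega
  obtain ⟨β, hall⟩ := exists_fourth_colour hcc' (fun h ↦ hc ⟨hxy', h⟩) hαc'
  have hα : (monoGraph χ (χ s(x, y))).Adj x y := ⟨hxy', rfl⟩
  by_cases hβ : ∃ v', (monoGraph χ c').Reachable v v' ∧ (monoGraph χ β).Adj y v'
  · obtain ⟨v', hvv', hyv'⟩ := hβ
    have hsep' : ∀ u, (monoGraph χ c).Reachable x u → ¬(monoGraph χ c').Reachable v' u :=
      fun u hu h ↦ hsep u hu (hvv'.trans h)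
    have hdom := isDominating_sup_monoGraph hall hsep' hxy hc'
    rcases sup_adj_of_reachable hall hsep' .rfl .rfl with hxv' | hxv'
    · exact ⟨_, _, _, _, _, _, ball_union_ball_union_ball_eq_univ hdom hα hxv' hyv'⟩
    · rw [sup_comm, Set.pair_comm y, Set.insert_comm x] at hdom
      exact ⟨_, _, _, _, _, _,
        ball_union_ball_union_ball_eq_univ (a := v') hdom hxv'.symm hyv'.symm hα⟩
  · push Not at hβ
    have hyα : ∀ w, (monoGraph χ c').Reachable v w → (monoGraph χ (χ s(x, y))).Adj y w :=
      fun w hw ↦ (sup_adj_of_reachable hall (fun u hu ↦ hsep u (hxy.trans hu)) .rfl hw).resolve_right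
        (hβ w hw)
    exact ⟨_, _, _, _, _, _, ball_union_ball_union_ball_eq_univ_of_forall_adj hall (hyα v .rfl)
      fun w hw ↦ hyα w hw.reachable⟩

end Colouring

/-- If a connected component `C` of the colour-`c` subgraph is disjoint from a nonempty
connected component `C'` of the colour-`c'` subgraph (with `c ≠ c'`), and the colouring
admits no cover of the vertices by three monochromatic connected sets of diameter at
most 160, then any two vertices of `C` are at colour-`c` distance at most 6 or at
colour-`c'` distance at most 6. -/
theorem stmt19 (n : ℕ) (χ : Sym2 (Fin n) → Fin 4) (c c' : Fin 4) (hcc : c ≠ c')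
    (C C' : Set (Fin n))
    (hC : ∃ v, C = {u | (monoGraph χ c).Reachable v u})
    (hC' : ∃ v, C' = {u | (monoGraph χ c').Reachable v u})
    (hdisj : Disjoint C C') (hne : C'.Nonempty)
    (hnocover : ¬ ∃ (A₁ A₂ A₃ : Set (Fin n)) (c₁ c₂ c₃ : Fin 4),
      A₁ ∪ A₂ ∪ A₃ = Set.univ ∧
      (((monoGraph χ c₁).induce A₁).Preconnected ∧
        ∀ x y : A₁, ((monoGraph χ c₁).induce A₁).dist x y ≤ 160) ∧
      (((monoGraph χ c₂).induce A₂).Preconnected ∧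
        ∀ x y : A₂, ((monoGraph χ c₂).induce A₂).dist x y ≤ 160) ∧
      (((monoGraph χ c₃).induce A₃).Preconnected ∧
        ∀ x y : A₃, ((monoGraph χ c₃).induce A₃).dist x y ≤ 160)) :
    ∀ x ∈ C, ∀ y ∈ C,
      (monoGraph χ c).dist x y ≤ 6 ∨
      ((monoGraph χ c').Reachable x y ∧ (monoGraph χ c').dist x y ≤ 6) := by
  intro x hx y hy
  by_contra! ⟨hfar, hfar'⟩
  obtain ⟨v₀, rfl⟩ := hC
  obtain ⟨v₀', rfl⟩ := hC'
  obtain ⟨v, hv⟩ := hne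
  have hc : ¬(monoGraph χ c).Adj x y := fun h ↦ by
    rw [dist_eq_one_iff_adj.mpr h] at hfar
    omega
  have hc' (p : (monoGraph χ c').Walk x y) : 2 < p.length := by
    have := (hfar' p.reachable).trans_le (dist_le p)
    omega
  have hsep (u) (hxu : (monoGraph χ c).Reachable x u) : ¬(monoGraph χ c').Reachable v u :=
    fun hvu ↦ Set.disjoint_left.mp hdisj (hx.trans hxu) (hv.trans hvu)
  obtain ⟨e₁, e₂, e₃, t₁, t₂, t₃, hcover⟩ :=
    exists_ball_union_ball_union_ball_eq_univ hcc hc hc' (hx.symm.trans hy) hsep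
  have hball (e : Fin 4) (t : Fin n) :
      ((monoGraph χ e).induce ((monoGraph χ e).ball t 3)).Preconnected ∧
        ∀ p q, ((monoGraph χ e).induce ((monoGraph χ e).ball t 3)).dist p q ≤ 160 :=
    ⟨preconnected_induce_ball t 3, fun p q ↦ (dist_induce_ball_le t 2 p q).trans (by norm_num)⟩
  exact hnocover ⟨_, _, _, e₁, e₂, e₃, hcover, hball e₁ t₁, hball e₂ t₂, hball e₃ t₃⟩
end
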